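/- arXiv:1701.03780 — 10 statements merged into one kernel-verified Lean document; each statement's English description precedes it below -/
import Mathlib

section
/- In any tournament, for every natural number i >= 1, the number of vertices whose out-degree d satisfies 2^{i-1} <= d < 2^i is at most 2^{i+1} - 1. -/
/-- In any tournament, for every i ≥ 1, the number of vertices whose out-degree d
satisfies 2^(i-1) ≤ d < 2^i is at most 2^(i+1) - 1. -/
theorem tournament_card_dyadic_outdeg
    {V : Type*} [Fintype V] [DecidableEq V] (T : V → V → Prop) [DecidableRel T]
    (hirr : ∀ v, ¬ T v v) (htot : ∀ u v : V, u ≠ v → (T u v ↔ ¬ T v u))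
    (i : ℕ) (hi : 1 ≤ i) :
    (Finset.univ.filter (fun x : V =>
        2 ^ (i - 1) ≤ (Finset.univ.filter (fun y => T x y)).card ∧
        (Finset.univ.filter (fun y => T x y)).card < 2 ^ i)).card ≤ 2 ^ (i + 1) - 1 := by
  classical
  set S := (Finset.univ.filter (fun x : V =>
        2 ^ (i - 1) ≤ (Finset.univ.filter (fun y => T x y)).card ∧
        (Finset.univ.filter (fun y => T x y)).card < 2 ^ i)) with hS
  set n := S.card with hn
  -- for each x ∈ S, out-degree within S plus in-degree within S is n - 1
  have h1 : ∀ x ∈ S, (S.filter (fun y => T x y)).card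
      + (S.filter (fun y => T y x)).card = n - 1 := by
    intro x hx
    have e1 : S.filter (fun y => T x y) = (S.erase x).filter (fun y => T x y) := by
      ext y
      simp only [Finset.mem_filter, Finset.mem_erase]
      constructor
      · rintro ⟨hy, hT⟩
        exact ⟨⟨fun h => hirr x (h ▸ hT), hy⟩, hT⟩
      · rintro ⟨⟨_, hy⟩, hT⟩; exact ⟨hy, hT⟩
    have e2 : S.filter (fun y => T y x) = (S.erase x).filter (fun y => ¬ T x y) := by
      ext y
      simp only [Finset.mem_filter, Finset.mem_erase]
      constructor
      · rintro ⟨hy, hT⟩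
        have hne : y ≠ x := fun h => hirr x (h ▸ hT)
        exact ⟨⟨hne, hy⟩, fun h => ((htot x y (Ne.symm hne)).mp h) hT⟩
      · rintro ⟨⟨hne, hy⟩, hT⟩
        refine ⟨hy, ?_⟩
        by_contra hyx
        exact hT (((htot x y (Ne.symm hne)).mpr hyx))
    rw [e1, e2, Finset.card_filter_add_card_filter_not,
      Finset.card_erase_of_mem hx]
  -- in-degree sum equals out-degree sum
  have h2 : ∑ x ∈ S, (S.filter (fun y => T y x)).card
      = ∑ x ∈ S, (S.filter (fun y => T x y)).card := by
    simp_rw [Finset.card_filter]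
    exact Finset.sum_comm
  have h3 : 2 * ∑ x ∈ S, (S.filter (fun y => T x y)).card = n * (n - 1) := by
    have := Finset.sum_congr rfl h1
    rw [Finset.sum_add_distrib, h2, Finset.sum_const, smul_eq_mul, ← hn] at this
    omega
  -- each out-degree within S is at most 2^i - 1
  have h4 : ∀ x ∈ S, (S.filter (fun y => T x y)).card ≤ 2 ^ i - 1 := by
    intro x hx
    have hlt : (Finset.univ.filter (fun y => T x y)).card < 2 ^ i :=
      (Finset.mem_filter.mp hx).2.2
    have hsub : S.filter (fun y => T x y) ⊆ Finset.univ.filter (fun y => T x y) :=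
      Finset.filter_subset_filter _ (Finset.subset_univ S)
    have := Finset.card_le_card hsub
    omega
  have h5 : ∑ x ∈ S, (S.filter (fun y => T x y)).card ≤ n * (2 ^ i - 1) := by
    calc ∑ x ∈ S, (S.filter (fun y => T x y)).card
        ≤ ∑ _x ∈ S, (2 ^ i - 1) := Finset.sum_le_sum h4
      _ = n * (2 ^ i - 1) := by rw [Finset.sum_const, smul_eq_mul]
  have hkey : n * (n - 1) ≤ 2 * (n * (2 ^ i - 1)) := by omega
  have hpow : (1 : ℕ) ≤ 2 ^ i := Nat.one_le_two_pow
  have hpow2 : 2 ^ (i + 1) = 2 * 2 ^ i := by ring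
  rcases Nat.eq_zero_or_pos n with h0 | hpos
  · omega
  · have : n - 1 ≤ 2 * (2 ^ i - 1) := by
      have := Nat.le_of_mul_le_mul_left (by
        calc n * (n - 1) ≤ 2 * (n * (2 ^ i - 1)) := hkey
          _ = n * (2 * (2 ^ i - 1)) := by ring) hpos
      exact this
    omega
end

section
/- Let A = (a_{ij}) be an n x n real matrix with a_{ii} = 0 for all i, a_{ij} >= 0 for all i ≠ j, and row sums at most 1. Then for every t and positive reals c_1, ..., c_t summing to 1, there is a partition of {1, ..., n} into pairwise disjoint sets S_1, ..., S_t such that for every r and every i in S_r, the sum over j in S_r of a_{ij} is at most 2 c_r. -/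
open Finset

lemma sym_core {n t : ℕ} (ht : 0 < t) (w : Fin n → Fin n → ℝ)
    (hsym : ∀ i j, w i j = w j i) (hdiag : ∀ i, w i i = 0)
    (hnn : ∀ i j, 0 ≤ w i j) (c : Fin t → ℝ) (hc : ∀ r, 0 < c r)
    (hsum : ∑ r, c r = 1) :
    ∃ f : Fin n → Fin t, ∀ i,
      ∑ j ∈ univ.filter (fun j => f j = f i), w i j ≤ c (f i) * ∑ j, w i j := by
  haveI : NeZero t := ⟨ht.ne'⟩
  obtain ⟨f, hf⟩ := Finite.exists_min
    (fun f : Fin n → Fin t => ∑ i, ∑ j, if f j = f i then w i j / c (f i) else 0)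
  refine ⟨f, fun i => ?_⟩
  -- decomposition of the potential
  have decomp : ∀ h : Fin n → Fin t,
      (∑ i', ∑ j, if h j = h i' then w i' j / c (h i') else 0)
      = (∑ i' ∈ univ.erase i, ∑ j ∈ univ.erase i,
          if h j = h i' then w i' j / c (h i') else 0)
        + 2 * ∑ j ∈ univ.erase i, (if h j = h i then w i j / c (h i) else 0) := by
    intro h
    have inner : ∀ i' : Fin n, (∑ j, if h j = h i' then w i' j / c (h i') else 0)
        = (∑ j ∈ univ.erase i, if h j = h i' then w i' j / c (h i') else 0)
          + (if h i = h i' then w i' i / c (h i') else 0) :=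
      fun i' => (Finset.sum_erase_add _ _ (mem_univ i)).symm
    have colrow : (∑ i' ∈ univ.erase i, if h i = h i' then w i' i / c (h i') else 0)
        = ∑ j ∈ univ.erase i, (if h j = h i then w i j / c (h i) else 0) := by
      refine Finset.sum_congr rfl fun j hj => ?_
      by_cases hji : h j = h i
      · rw [if_pos hji.symm, if_pos hji, hji, hsym]
      · rw [if_neg (fun hh => hji hh.symm), if_neg hji]
    calc (∑ i', ∑ j, if h j = h i' then w i' j / c (h i') else 0)
        = (∑ i' ∈ univ.erase i, ∑ j, if h j = h i' then w i' j / c (h i') else 0)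
          + ∑ j, (if h j = h i then w i j / c (h i) else 0) :=
          (Finset.sum_erase_add _ _ (mem_univ i)).symm
      _ = _ := by
          rw [Finset.sum_congr rfl (fun i' _ => inner i'), Finset.sum_add_distrib, colrow,
            inner i]
          simp only [hdiag, zero_div, ite_self]
          ring
  -- E s : weight from i into class s (excluding i)
  set E : Fin t → ℝ := fun s => ∑ j ∈ univ.erase i, (if f j = s then w i j else 0) with hE
  have key : ∀ s, E (f i) * c s ≤ E s * c (f i) := by
    intro s
    have hmin := hf (Function.update f i s)
    rw [decomp f, decomp (Function.update f i s)] at hmin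
    have rest_eq : (∑ i' ∈ univ.erase i, ∑ j ∈ univ.erase i,
        if (Function.update f i s) j = (Function.update f i s) i' then
          w i' j / c ((Function.update f i s) i') else 0)
        = ∑ i' ∈ univ.erase i, ∑ j ∈ univ.erase i,
            if f j = f i' then w i' j / c (f i') else 0 := by
      refine Finset.sum_congr rfl fun i' hi' => Finset.sum_congr rfl fun j hj => ?_
      rw [Function.update_of_ne (mem_erase.mp hj).1, Function.update_of_ne (mem_erase.mp hi').1]
    have lhs_eq : (∑ j ∈ univ.erase i, (if f j = f i then w i j / c (f i) else 0))
        = E (f i) / c (f i) := by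
      rw [hE]
      rw [Finset.sum_div]
      refine Finset.sum_congr rfl fun j hj => ?_
      split <;> simp
    have rhs_eq : (∑ j ∈ univ.erase i, (if (Function.update f i s) j = (Function.update f i s) i
          then w i j / c ((Function.update f i s) i) else 0))
        = E s / c s := by
      rw [hE, Finset.sum_div]
      refine Finset.sum_congr rfl fun j hj => ?_
      rw [Function.update_of_ne (mem_erase.mp hj).1, Function.update_self]
      split <;> simp
    rw [rest_eq, lhs_eq, rhs_eq] at hmin
    have hdd : E (f i) / c (f i) ≤ E s / c s := by linarith
    exact (div_le_div_iff₀ (hc (f i)) (hc s)).mp hdd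
  have sumE : ∑ s, E s = ∑ j, w i j := by
    rw [hE, Finset.sum_comm]
    have : ∀ j ∈ univ.erase i, (∑ s, if f j = s then w i j else 0) = w i j := by
      intro j hj
      rw [Finset.sum_ite_eq]
      simp
    rw [Finset.sum_congr rfl this]
    exact Finset.sum_erase _ (by rw [hdiag])
  have step : E (f i) ≤ c (f i) * ∑ j, w i j := by
    have h1 : E (f i) * (∑ s, c s) ≤ (∑ s, E s) * c (f i) := by
      rw [Finset.mul_sum, Finset.sum_mul]
      exact Finset.sum_le_sum fun s _ => key s
    rw [hsum, mul_one, sumE] at h1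
    linarith [h1]
  have lhs : ∑ j ∈ univ.filter (fun j => f j = f i), w i j = E (f i) := by
    rw [Finset.sum_filter, hE, ← Finset.sum_erase_add _ _ (mem_univ i)]
    simp [hdiag]
  rw [lhs]; exact step
open Finset

private def lamSeq {n : ℕ} (A : Fin n → Fin n → ℝ) (θ : ℝ) : ℕ → Fin n → ℝ
  | 0 => fun _ => 1
  | (k+1) => fun i => θ * ∑ j, lamSeq A θ k j * A j i

lemma exists_lambda {n : ℕ} (A : Fin n → Fin n → ℝ) (hnn : ∀ i j, 0 ≤ A i j)
    (hrow : ∀ i, ∑ j, A i j ≤ 1) (θ : ℝ) (hθ0 : 0 < θ) (hθ1 : θ < 1) :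
    ∃ L : Fin n → ℝ, (∀ i, 1 ≤ L i) ∧ ∀ i, θ * ∑ j, L j * A j i ≤ L i := by
  rcases Nat.eq_zero_or_pos n with hn | hn
  · subst hn
    exact ⟨fun _ => 1, fun i => i.elim0, fun i => i.elim0⟩
  have hv0 : ∀ k i, 0 ≤ lamSeq A θ k i := by
    intro k
    induction k with
    | zero => intro i; simp [lamSeq]
    | succ k ih =>
      intro i
      simp only [lamSeq]
      exact mul_nonneg hθ0.le (Finset.sum_nonneg fun j _ => mul_nonneg (ih j) (hnn j i))
  have hvtot : ∀ k, ∑ i, lamSeq A θ k i ≤ n * θ ^ k := by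
    intro k
    induction k with
    | zero => simp [lamSeq]
    | succ k ih =>
      have : ∑ i, lamSeq A θ (k+1) i = θ * ∑ j, lamSeq A θ k j * ∑ i, A j i := by
        simp only [lamSeq, ← Finset.mul_sum]
        rw [Finset.sum_comm]
        congr 1
        exact Finset.sum_congr rfl fun j _ => (Finset.mul_sum _ _ _).symm
      rw [this]
      have h1 : ∑ j, lamSeq A θ k j * ∑ i, A j i ≤ ∑ j, lamSeq A θ k j := by
        refine Finset.sum_le_sum fun j _ => ?_
        calc lamSeq A θ k j * ∑ i, A j i ≤ lamSeq A θ k j * 1 :=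
              mul_le_mul_of_nonneg_left (hrow j) (hv0 k j)
          _ = lamSeq A θ k j := mul_one _
      calc θ * ∑ j, lamSeq A θ k j * ∑ i, A j i ≤ θ * (n * θ ^ k) := by
            exact mul_le_mul_of_nonneg_left (h1.trans ih) hθ0.le
        _ = n * θ ^ (k+1) := by ring
  obtain ⟨K, hK⟩ := exists_pow_lt_of_lt_one (show (0:ℝ) < 1 / n by positivity) hθ1
  refine ⟨fun i => ∑ k ∈ Finset.range (K+1), lamSeq A θ k i, fun i => ?_, fun i => ?_⟩
  · show 1 ≤ ∑ k ∈ Finset.range (K+1), lamSeq A θ k i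
    rw [Finset.sum_range_succ']
    have h0 : lamSeq A θ 0 i = 1 := rfl
    rw [h0]
    have : 0 ≤ ∑ k ∈ Finset.range K, lamSeq A θ (k+1) i :=
      Finset.sum_nonneg fun k _ => hv0 _ i
    linarith
  · have hlast : lamSeq A θ (K+1) i ≤ 1 := by
      have h1 : lamSeq A θ (K+1) i ≤ ∑ i', lamSeq A θ (K+1) i' :=
        Finset.single_le_sum (fun i' _ => hv0 _ i') (mem_univ i)
      have h2 : (n : ℝ) * θ ^ (K+1) ≤ n * θ ^ K := by
        have h := pow_le_pow_of_le_one hθ0.le hθ1.le (Nat.le_succ K)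
        have hn' : (0:ℝ) ≤ n := by positivity
        exact mul_le_mul_of_nonneg_left h hn'
      have h3 : (n : ℝ) * θ ^ K < 1 := by
        have hn' : (0:ℝ) < n := by exact_mod_cast hn
        rw [div_eq_mul_inv] at hK
        calc (n:ℝ) * θ ^ K < n * (1/n) := by
              apply mul_lt_mul_of_pos_left _ hn'
              simpa [div_eq_mul_inv] using hK
          _ = 1 := by field_simp
      linarith [hvtot (K+1)]
    have hswap : θ * ∑ j, (∑ k ∈ Finset.range (K+1), lamSeq A θ k j) * A j i
        = ∑ k ∈ Finset.range (K+1), lamSeq A θ (k+1) i := by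
      calc θ * ∑ j, (∑ k ∈ Finset.range (K+1), lamSeq A θ k j) * A j i
          = θ * ∑ j, ∑ k ∈ Finset.range (K+1), lamSeq A θ k j * A j i := by
            congr 1; exact Finset.sum_congr rfl fun j _ => Finset.sum_mul _ _ _
        _ = θ * ∑ k ∈ Finset.range (K+1), ∑ j, lamSeq A θ k j * A j i := by
            rw [Finset.sum_comm]
        _ = ∑ k ∈ Finset.range (K+1), θ * ∑ j, lamSeq A θ k j * A j i :=
            Finset.mul_sum _ _ _
        _ = ∑ k ∈ Finset.range (K+1), lamSeq A θ (k+1) i := by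
            simp [lamSeq]
    show θ * ∑ j, (∑ k ∈ Finset.range (K+1), lamSeq A θ k j) * A j i
        ≤ ∑ k ∈ Finset.range (K+1), lamSeq A θ k i
    rw [hswap]
    have e1 : ∑ k ∈ Finset.range (K+1), lamSeq A θ (k+1) i
        = ∑ k ∈ Finset.range (K+2), lamSeq A θ k i - 1 := by
      rw [Finset.sum_range_succ' (fun k => lamSeq A θ k i) (K+1)]
      simp [lamSeq]
    have e2 : ∑ k ∈ Finset.range (K+2), lamSeq A θ k i
        = ∑ k ∈ Finset.range (K+1), lamSeq A θ k i + lamSeq A θ (K+1) i :=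
      Finset.sum_range_succ _ _
    rw [e1, e2]
    linarith

lemma scaled {n t : ℕ} (ht : 0 < t) (A : Fin n → Fin n → ℝ)
    (hdiag : ∀ i, A i i = 0) (hnn : ∀ i j, 0 ≤ A i j)
    (hrow : ∀ i, ∑ j, A i j ≤ 1)
    (c : Fin t → ℝ) (hc : ∀ r, 0 < c r) (hsum : ∑ r, c r = 1)
    (θ : ℝ) (hθ0 : 0 < θ) (hθ1 : θ < 1) :
    ∃ f : Fin n → Fin t, ∀ i,
      ∑ j ∈ univ.filter (fun j => f j = f i), A i j ≤ 2 * c (f i) / θ := by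
  obtain ⟨L, hL1, hL2⟩ := exists_lambda A hnn hrow θ hθ0 hθ1
  have hL0 : ∀ i, 0 < L i := fun i => lt_of_lt_of_le one_pos (hL1 i)
  set w : Fin n → Fin n → ℝ := fun i j => θ * (L i * A i j + L j * A j i) with hw
  have hsym : ∀ i j, w i j = w j i := by intro i j; simp only [hw]; ring
  have hd : ∀ i, w i i = 0 := by intro i; simp [hw, hdiag]
  have hwnn : ∀ i j, 0 ≤ w i j := fun i j =>
    mul_nonneg hθ0.le (add_nonneg (mul_nonneg (hL0 i).le (hnn i j))
      (mul_nonneg (hL0 j).le (hnn j i)))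
  obtain ⟨f, hf⟩ := sym_core ht w hsym hd hwnn c hc hsum
  refine ⟨f, fun i => ?_⟩
  have expand : ∑ j, w i j = θ * (L i * ∑ j, A i j) + θ * ∑ j, L j * A j i := by
    rw [eq_comm, Finset.mul_sum, Finset.mul_sum, Finset.mul_sum, ← Finset.sum_add_distrib]
    exact Finset.sum_congr rfl fun j _ => by simp only [hw]; ring
  have hrowW : ∑ j, w i j ≤ 2 * L i := by
    rw [expand]
    have h1 : θ * ∑ j, L j * A j i ≤ L i := hL2 i
    have h2 : θ * (L i * ∑ j, A i j) ≤ L i := by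
      have e1 : (θ * L i) * ∑ j, A i j ≤ (θ * L i) * 1 :=
        mul_le_mul_of_nonneg_left (hrow i) (mul_nonneg hθ0.le (hL0 i).le)
      have e2 : θ * L i ≤ 1 * L i := mul_le_mul_of_nonneg_right hθ1.le (hL0 i).le
      nlinarith [e1, e2]
    linarith
  have hbound : ∑ j ∈ univ.filter (fun j => f j = f i), w i j ≤ 2 * c (f i) * L i := by
    calc ∑ j ∈ univ.filter (fun j => f j = f i), w i j ≤ c (f i) * ∑ j, w i j := hf i
      _ ≤ c (f i) * (2 * L i) := mul_le_mul_of_nonneg_left hrowW (hc (f i)).le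
      _ = 2 * c (f i) * L i := by ring
  have hlow : θ * L i * ∑ j ∈ univ.filter (fun j => f j = f i), A i j
      ≤ ∑ j ∈ univ.filter (fun j => f j = f i), w i j := by
    rw [Finset.mul_sum]
    refine Finset.sum_le_sum fun j _ => ?_
    simp only [hw]
    have := mul_nonneg hθ0.le (mul_nonneg (hL0 j).le (hnn j i))
    nlinarith [this]
  rw [le_div_iff₀ hθ0]
  have hLpos := hL0 i
  nlinarith [hbound, hlow]


/-- Alon's generalization of Ball's matrix partition lemma. -/
theorem matrix_partition_lemma (n t : ℕ) (A : Fin n → Fin n → ℝ)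
    (hdiag : ∀ i, A i i = 0) (hnn : ∀ i j, i ≠ j → 0 ≤ A i j)
    (hrow : ∀ i, ∑ j, A i j ≤ 1)
    (c : Fin t → ℝ) (hc : ∀ r, 0 < c r) (hsum : ∑ r, c r = 1) :
    ∃ S : Fin t → Finset (Fin n),
      (∀ r s, r ≠ s → Disjoint (S r) (S s)) ∧
      (Finset.univ.biUnion S = Finset.univ) ∧
      (∀ r, ∀ i ∈ S r, ∑ j ∈ S r, A i j ≤ 2 * c r) := by
  rcases Nat.eq_zero_or_pos t with ht0 | ht
  · subst ht0; simp at hsum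
  have hA : ∀ i j, 0 ≤ A i j := by
    intro i j
    by_cases h : i = j
    · subst h; rw [hdiag]
    · exact hnn i j h
  have hc1 : ∀ r, c r ≤ 1 := fun r =>
    hsum ▸ Finset.single_le_sum (fun s _ => (hc s).le) (mem_univ r)
  have main : ∃ f : Fin n → Fin t, ∀ i,
      ∑ j ∈ univ.filter (fun j => f j = f i), A i j ≤ 2 * c (f i) := by
    by_contra hcon
    push_neg at hcon
    choose I hI using hcon
    haveI : NeZero t := ⟨ht.ne'⟩
    obtain ⟨f₀, hmin⟩ := Finite.exists_min (fun f : Fin n → Fin t =>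
      ∑ j ∈ univ.filter (fun j => f j = f (I f)), A (I f) j - 2 * c (f (I f)))
    set δ := ∑ j ∈ univ.filter (fun j => f₀ j = f₀ (I f₀)), A (I f₀) j - 2 * c (f₀ (I f₀))
      with hδdef
    have hδ : 0 < δ := sub_pos.mpr (hI f₀)
    have hden : (0:ℝ) < 1 + δ/4 := by linarith
    set θ : ℝ := 1 / (1 + δ/4) with hθdef
    have hθ0 : 0 < θ := by rw [hθdef]; positivity
    have hθ1 : θ < 1 := by rw [hθdef, div_lt_one hden]; linarith
    clear_value θ δ
    obtain ⟨f, hf⟩ := scaled ht A hdiag hA hrow c hc hsum θ hθ0 hθ1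
    have h1 : δ ≤ ∑ j ∈ univ.filter (fun j => f j = f (I f)), A (I f) j
        - 2 * c (f (I f)) := hmin f
    have h2 := hf (I f)
    have h3 : 2 * c (f (I f)) / θ = 2 * c (f (I f)) + c (f (I f)) * δ / 2 := by
      rw [hθdef]
      field_simp
      ring
    rw [h3] at h2
    have h4 : c (f (I f)) * δ ≤ 1 * δ :=
      mul_le_mul_of_nonneg_right (hc1 (f (I f))) hδ.le
    linarith
  obtain ⟨f, hf⟩ := main
  refine ⟨fun r => univ.filter (fun i => f i = r), ?_, ?_, ?_⟩
  · intro r s hrs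
    simp only [Finset.disjoint_left, mem_filter]
    rintro a ⟨-, ha⟩ ⟨-, hb⟩
    exact hrs (by rw [← ha, ← hb])
  · ext i
    simp
  · intro r i hi
    have hfi : f i = r := by simpa using hi
    subst hfi
    exact hf i
end

section
/- For every k >= 2 there exists a digraph (namely the regular tournament on 2k-1 vertices in which every vertex has out-degree k-1) which is not 1/k-majority m-colourable for any m < 2k - 1; consequently the minimum number of colours m(k) needed to 1/k-majority colour every digraph satisfies m(k) >= 2k - 1. -/
theorem fin_sub_add' (n : ℕ) (u v : Fin n) (h : u ≠ v) :
    (u - v).val + (v - u).val = n := by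
  have hu := u.isLt
  have hv := v.isLt
  have hne : u.val ≠ v.val := fun h' => h (Fin.ext h')
  rw [Fin.sub_def, Fin.sub_def]
  simp only []
  rcases Nat.lt_or_ge u.val v.val with hlt | hge
  · have e1 : (n - v.val + u.val) % n = n - v.val + u.val := Nat.mod_eq_of_lt (by omega)
    have e2 : (n - u.val + v.val) % n = v.val - u.val := by
      have : n - u.val + v.val = n + (v.val - u.val) := by omega
      rw [this, Nat.add_mod_left, Nat.mod_eq_of_lt (by omega)]
    omega
  · have e1 : (n - v.val + u.val) % n = u.val - v.val := by
      have : n - v.val + u.val = n + (u.val - v.val) := by omega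
      rw [this, Nat.add_mod_left, Nat.mod_eq_of_lt (by omega)]
    have e2 : (n - u.val + v.val) % n = n - u.val + v.val := Nat.mod_eq_of_lt (by omega)
    omega

/-- For every k ≥ 2 there is a digraph on 2k-1 vertices, namely a regular tournament
in which every vertex has out-degree k-1, which is not 1/k-majority m-colourable
for any m < 2k-1. -/
theorem majority_lower_bound (k : ℕ) (hk : 2 ≤ k) :
    ∃ D : Fin (2 * k - 1) → Fin (2 * k - 1) → Prop, ∃ _ : DecidableRel D,
      (∀ v, ¬ D v v) ∧
      (∀ u v : Fin (2 * k - 1), u ≠ v → (D u v ↔ ¬ D v u)) ∧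
      (∀ v, (Finset.univ.filter (fun u => D v u)).card = k - 1) ∧
      (∀ m : ℕ, m < 2 * k - 1 →
        ¬ ∃ c : Fin (2 * k - 1) → Fin m, ∀ v,
          k * (Finset.univ.filter (fun u => D v u ∧ c u = c v)).card ≤
            (Finset.univ.filter (fun u => D v u)).card) := by
  set n := 2 * k - 1 with hn
  have hn3 : 3 ≤ n := by omega
  haveI : NeZero n := ⟨by omega⟩
  have hreg : ∀ v : Fin n,
      (Finset.univ.filter (fun u => 1 ≤ (u - v).val ∧ (u - v).val ≤ k - 1)).card = k - 1 := by
    intro v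
    have hbij : (Finset.univ.filter (fun u => 1 ≤ (u - v).val ∧ (u - v).val ≤ k - 1)).card
        = (Finset.univ.filter (fun w : Fin n => 1 ≤ w.val ∧ w.val ≤ k - 1)).card := by
      apply Finset.card_bij (fun w _ => w - v)
      · intro a ha; simp at ha ⊢; exact ha
      · intro a _ b _ hab
        have := congrArg (· + v) hab
        simpa using this
      · intro b hb
        refine ⟨b + v, ?_, by simp⟩
        simp at hb ⊢
        exact hb
    rw [hbij]
    have : (Finset.univ.filter (fun w : Fin n => 1 ≤ w.val ∧ w.val ≤ k - 1))
        = Finset.Icc (⟨1, by omega⟩ : Fin n) ⟨k - 1, by omega⟩ := by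
      ext w
      simp [Finset.mem_Icc, Fin.le_def]
    rw [this, Fin.card_Icc]
    simp
  refine ⟨fun v u => 1 ≤ (u - v).val ∧ (u - v).val ≤ k - 1, inferInstance, ?_, ?_, hreg, ?_⟩
  · intro v h
    have : (v - v).val = 0 := by simp
    omega
  · intro u v huv
    have key := fin_sub_add' n v u (Ne.symm huv)
    have h1 : 1 ≤ (v - u).val := by omega
    have h2 : 1 ≤ (u - v).val := by omega
    constructor
    · rintro ⟨-, hle⟩ ⟨-, hle'⟩; omega
    · intro hnot
      refine ⟨h1, ?_⟩
      by_contra hgt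
      exact hnot ⟨h2, by omega⟩
  · rintro m hm ⟨c, hc⟩
    have hprop : ∀ v u : Fin n, (1 ≤ (u - v).val ∧ (u - v).val ≤ k - 1) → c u ≠ c v := by
      intro v u hD hcu
      have hle := hc v
      rw [hreg v] at hle
      have hmem : u ∈ Finset.univ.filter
          (fun u => (1 ≤ (u - v).val ∧ (u - v).val ≤ k - 1) ∧ c u = c v) := by
        simp [hD.1, hD.2, hcu]
      have h1 : 1 ≤ (Finset.univ.filter
          (fun u => (1 ≤ (u - v).val ∧ (u - v).val ≤ k - 1) ∧ c u = c v)).card :=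
        Finset.card_pos.mpr ⟨u, hmem⟩
      simp only at hle
      have h2 : k * 1 ≤ k * (Finset.univ.filter
          (fun u => (1 ≤ (u - v).val ∧ (u - v).val ≤ k - 1) ∧ c u = c v)).card :=
        Nat.mul_le_mul_left k h1
      rw [Nat.mul_one] at h2
      have := le_trans h2 hle
      omega
    have hinj : Function.Injective c := by
      intro a b hab
      by_contra hne
      have key := fin_sub_add' n a b hne
      rcases Nat.lt_or_ge (a - b).val k with h' | h'
      · have h0 : a - b ≠ 0 := by
          intro h0
          rw [h0] at key
          simp at key
          omega
        have h0' : 1 ≤ (a - b).val := by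
          rcases Nat.eq_zero_or_pos (a - b).val with h | h
          · exact absurd (Fin.ext h) h0
          · exact h
        exact hprop b a ⟨h0', by omega⟩ hab
      · exact hprop a b ⟨by omega, by omega⟩ hab.symm
    have := Fintype.card_le_of_injective c hinj
    simp at this
    omega
end

section
/- Every tournament can be 3-coloured so that all but at most 205 vertices receive the same colour as at most half of their out-neighbours. -/
open Finset

lemma tourn_deg_bound {V : Type*} [Fintype V] [DecidableEq V] (T : V → V → Prop) [DecidableRel T]
    (hirr : ∀ v, ¬ T v v) (htot : ∀ u v : V, u ≠ v → (T u v ↔ ¬ T v u)) (k : ℕ) :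
    (univ.filter fun x : V => (univ.filter (fun y => T x y)).card ≤ k).card ≤ 2 * k + 1 := by
  set A := univ.filter fun x : V => (univ.filter (fun y => T x y)).card ≤ k with hA
  set f : ℕ := ∑ x ∈ A, (A.filter (fun y => T x y)).card with hf
  have hsq : A.card * A.card = 2 * f + A.card := by
    have h1 : ∀ x ∈ A, ∀ y ∈ A,
        ((if T x y then 1 else 0) + (if T y x then 1 else 0) + (if x = y then 1 else 0) : ℕ) = 1 := by
      intro x _ y _
      rcases eq_or_ne x y with rfl | hxy
      · simp [hirr x]
      · by_cases h : T x y
        · simp [h, (htot x y hxy).mp h, hxy]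
        · have hyx : T y x := by
            by_contra h2
            exact h ((htot x y hxy).mpr h2)
          simp [h, hyx, hxy]
    have h2 : ∑ x ∈ A, ∑ y ∈ A, ((if T x y then 1 else 0) + (if T y x then 1 else 0)
        + (if x = y then 1 else 0) : ℕ) = A.card * A.card := by
      rw [← Finset.sum_product']
      rw [Finset.sum_congr rfl (fun p hp => by
        simp only [Finset.mem_product] at hp
        exact h1 p.1 hp.1 p.2 hp.2)]
      simp [Finset.card_product, mul_comm]
    have h3 : ∀ x ∈ A, ∑ y ∈ A, ((if T x y then 1 else 0) : ℕ) = (A.filter (fun y => T x y)).card := by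
      intro x _; rw [Finset.card_filter]
    have h4 : ∑ x ∈ A, ∑ y ∈ A, ((if T y x then 1 else 0) : ℕ) = f := by
      rw [Finset.sum_comm]
      exact Finset.sum_congr rfl (fun x hx => by rw [Finset.card_filter])
    have h5 : ∑ x ∈ A, ∑ y ∈ A, ((if x = y then 1 else 0) : ℕ) = A.card := by
      calc ∑ x ∈ A, ∑ y ∈ A, ((if x = y then 1 else 0) : ℕ) = ∑ x ∈ A, 1 := by
            refine Finset.sum_congr rfl (fun x hx => ?_)
            rw [Finset.sum_ite_eq A x (fun _ => 1)]
            simp [hx]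
        _ = A.card := by simp
    have := h2
    simp only [Finset.sum_add_distrib] at this
    rw [h4, h5] at this
    have h6 : ∑ x ∈ A, ∑ y ∈ A, ((if T x y then 1 else 0) : ℕ) = f := by
      exact Finset.sum_congr rfl (fun x hx => by rw [Finset.card_filter])
    rw [h6] at this
    omega
  have hfk : f ≤ A.card * k := by
    rw [hf]
    calc ∑ x ∈ A, (A.filter (fun y => T x y)).card
        ≤ ∑ x ∈ A, k := by
          refine Finset.sum_le_sum (fun x hx => ?_)
          have hsub : A.filter (fun y => T x y) ⊆ univ.filter (fun y => T x y) :=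
            Finset.filter_subset_filter _ (Finset.subset_univ _)
          have := Finset.card_le_card hsub
          have hxk : (univ.filter (fun y => T x y)).card ≤ k := by
            rw [hA] at hx; simpa using (Finset.mem_filter.mp hx).2
          omega
      _ = A.card * k := by simp [mul_comm]
  nlinarith [hsq, hfk]

lemma count_identity {V : Type*} [Fintype V] [DecidableEq V] (T : V → V → Prop) [DecidableRel T]
    (x : V) (hx : ¬ T x x) :
    ∑ c : V → Fin 3, ∏ y ∈ univ.filter (fun y => T x y), (if c y = c x then 2 else (1:ℕ))
      = 3 * (4 ^ (univ.filter (fun y => T x y)).card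
          * 3 ^ (Fintype.card V - 1 - (univ.filter (fun y => T x y)).card)) := by
  classical
  set N := univ.filter (fun y => T x y) with hN
  have hxN : x ∉ N := by simp [hN, hx]
  set g : Fin 3 → V → Fin 3 → ℕ := fun a v b =>
    if v = x then (if b = a then 1 else 0) else if v ∈ N then (if b = a then 2 else 1) else 1
    with hg
  -- Step A: pointwise identity
  have stepA : ∀ c : V → Fin 3,
      (∏ y ∈ N, (if c y = c x then 2 else (1:ℕ)))
        = ∑ a : Fin 3, ∏ v : V, g a v (c v) := by
    intro c
    have hprod : ∀ a : Fin 3, ∏ v : V, g a v (c v)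
        = (if c x = a then 1 else 0) * ∏ y ∈ N, (if c y = a then 2 else (1:ℕ)) := by
      intro a
      rw [← Finset.mul_prod_erase univ (fun v => g a v (c v)) (Finset.mem_univ x)]
      have h1 : g a x (c x) = (if c x = a then 1 else 0) := by simp [hg]
      have h2 : ∏ v ∈ univ.erase x, g a v (c v) = ∏ y ∈ N, (if c y = a then 2 else (1:ℕ)) := by
        rw [← Finset.prod_subset (s₁ := N) (s₂ := univ.erase x)]
        · exact Finset.prod_congr rfl (fun y hy => by
            have hyx : y ≠ x := fun h => hxN (h ▸ hy)
            simp [hg, hyx, hy])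
        · intro y hy
          exact Finset.mem_erase.mpr ⟨fun h => hxN (h ▸ hy), Finset.mem_univ y⟩
        · intro v hv hvN
          have hvx : v ≠ x := (Finset.mem_erase.mp hv).1
          simp [hg, hvx, hvN]
      rw [h1, h2]
    simp only [hprod]
    rw [show ∀ (s : Finset (Fin 3)), (∑ a ∈ s, (if c x = a then 1 else 0) * ∏ y ∈ N, (if c y = a then 2 else (1:ℕ)))
        = ∑ a ∈ s, (if c x = a then (∏ y ∈ N, (if c y = a then 2 else (1:ℕ))) else 0) from
      fun s => Finset.sum_congr rfl (fun a _ => by split <;> simp)]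
    rw [Finset.sum_ite_eq univ (c x) (fun a => ∏ y ∈ N, (if c y = a then 2 else (1:ℕ)))]
    simp
  -- Step B+C
  calc ∑ c : V → Fin 3, ∏ y ∈ N, (if c y = c x then 2 else (1:ℕ))
      = ∑ c : V → Fin 3, ∑ a : Fin 3, ∏ v : V, g a v (c v) := by
        exact Finset.sum_congr rfl (fun c _ => stepA c)
    _ = ∑ a : Fin 3, ∑ c : V → Fin 3, ∏ v : V, g a v (c v) := Finset.sum_comm
    _ = ∑ a : Fin 3, ∏ v : V, ∑ b : Fin 3, g a v b := by
        refine Finset.sum_congr rfl (fun a _ => ?_)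
        rw [← Fintype.piFinset_univ, ← Finset.prod_univ_sum]
    _ = ∑ a : Fin 3, (4 ^ N.card * 3 ^ (Fintype.card V - 1 - N.card)) := by
        refine Finset.sum_congr rfl (fun a _ => ?_)
        have hpt : ∀ v : V, ∑ b : Fin 3, g a v b
            = (if v = x then 1 else if v ∈ N then 4 else 3) := by
          intro v
          by_cases hvx : v = x
          · subst hvx
            simp only [hg, if_pos rfl]
            rw [Finset.sum_ite_eq' univ a (fun _ => 1)]
            simp
          · by_cases hvN : v ∈ N
            · simp only [hg, if_neg hvx, if_pos hvN]
              have : ∀ b : Fin 3, (if b = a then 2 else (1:ℕ)) = 1 + (if b = a then 1 else 0) := by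
                intro b; split <;> rfl
              simp only [this, Finset.sum_add_distrib]
              rw [Finset.sum_ite_eq' univ a (fun _ => 1)]
              simp
            · simp [hg, hvx, hvN]
        simp only [hpt]
        rw [← Finset.mul_prod_erase univ _ (Finset.mem_univ x), if_pos rfl, one_mul]
        have hsub : N ⊆ univ.erase x := fun y hy =>
          Finset.mem_erase.mpr ⟨fun h => hxN (h ▸ hy), Finset.mem_univ y⟩
        rw [← Finset.prod_sdiff hsub]
        have hc1 : ∏ v ∈ univ.erase x \ N, (if v = x then 1 else if v ∈ N then 4 else 3)
            = 3 ^ (Fintype.card V - 1 - N.card) := by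
          rw [Finset.prod_congr rfl (fun v hv => ?_), Finset.prod_const]
          · congr 1
            rw [Finset.card_sdiff_of_subset hsub, Finset.card_erase_of_mem (Finset.mem_univ x),
              Finset.card_univ]
          · rcases Finset.mem_sdiff.mp hv with ⟨hv1, hv2⟩
            simp [(Finset.mem_erase.mp hv1).1, hv2]
        have hc2 : ∏ v ∈ N, (if v = x then 1 else if v ∈ N then 4 else 3) = 4 ^ N.card := by
          rw [Finset.prod_congr rfl (fun v hv => ?_), Finset.prod_const]
          have hvx : v ≠ x := fun h => hxN (h ▸ hv)
          simp [hvx, hv]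
        rw [hc1, hc2]; ring
    _ = 3 * (4 ^ N.card * 3 ^ (Fintype.card V - 1 - N.card)) := by rw [Finset.sum_const, Finset.card_univ, Fintype.card_fin, smul_eq_mul]

noncomputable def mcQ (m : ℕ) : ℚ := (2/3) * (8/9) ^ m

lemma mcQ_pos (m : ℕ) : 0 < mcQ m := by unfold mcQ; positivity

lemma mcQ_succ (m : ℕ) : mcQ (m+1) = (8/9) * mcQ m := by
  unfold mcQ; rw [pow_succ]; ring

lemma mcQ_anti {a b : ℕ} (h : a ≤ b) : mcQ b ≤ mcQ a := by
  unfold mcQ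
  have : ((8:ℚ)/9) ^ b ≤ (8/9) ^ a :=
    pow_le_pow_of_le_one (by norm_num) (by norm_num) h
  linarith
lemma mcQ_step_nonneg (t : ℕ) : 0 ≤ mcQ t - mcQ (t+1) := by
  have := mcQ_anti (Nat.le_succ t); linarith

lemma mcQ_tele {a b : ℕ} (h : a ≤ b) :
    ∑ t ∈ Ico a b, (mcQ t - mcQ (t+1)) = mcQ a - mcQ b := by
  induction b, h using Nat.le_induction with
  | base => simp
  | succ b hb ih =>
    rw [Finset.sum_Ico_succ_top hb, ih]; ring

lemma mcQ_H {TT : ℕ} (h : 51 ≤ TT) :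
    (4*TT+3 : ℚ) * mcQ TT + ∑ t ∈ Ico 51 TT, (mcQ t - mcQ (t+1)) * (4*t+3)
      = 239 * mcQ 51 - 36 * mcQ (TT+1) := by
  induction TT, h using Nat.le_induction with
  | base =>
    simp only [Ico_self, Finset.sum_empty, add_zero]
    have h52 : mcQ (51+1) = (8/9) * mcQ 51 := mcQ_succ 51
    push_cast
    rw [h52]; ring
  | succ TT hTT ih =>
    rw [Finset.sum_Ico_succ_top hTT]
    have h1 : mcQ (TT+1) = (8/9) * mcQ TT := mcQ_succ TT
    have h2 : mcQ (TT+2) = (8/9) * mcQ (TT+1) := mcQ_succ (TT+1)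
    push_cast
    push_cast at ih
    nlinarith [ih, h1, h2]

lemma sum_mcQ_bound {V : Type*} [DecidableEq V] (A : Finset V) (mf : V → ℕ)
    (hM : ∀ x ∈ A, 51 ≤ mf x)
    (hcount : ∀ t : ℕ, ((A.filter (fun x => mf x ≤ t)).card : ℚ) ≤ 4*t+3)
    (TT : ℕ) (hT : 51 ≤ TT) (hAcard : (A.card : ℚ) ≤ 4*TT+3) :
    ∑ x ∈ A, mcQ (mf x) ≤ 239 * mcQ 51 := by
  have point : ∀ x ∈ A, mcQ (mf x)
      ≤ mcQ TT + ∑ t ∈ (Ico 51 TT).filter (fun t => mf x ≤ t), (mcQ t - mcQ (t+1)) := by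
    intro x hx
    by_cases hxT : TT ≤ mf x
    · have h1 : mcQ (mf x) ≤ mcQ TT := mcQ_anti hxT
      have h2 : 0 ≤ ∑ t ∈ (Ico 51 TT).filter (fun t => mf x ≤ t), (mcQ t - mcQ (t+1)) :=
        Finset.sum_nonneg (fun t _ => mcQ_step_nonneg t)
      linarith
    · push_neg at hxT
      have hfe : (Ico 51 TT).filter (fun t => mf x ≤ t) = Ico (mf x) TT := by
        ext t
        simp only [Finset.mem_filter, Finset.mem_Ico]
        have := hM x hx
        omega
      rw [hfe, mcQ_tele (le_of_lt hxT)]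
      linarith
  calc ∑ x ∈ A, mcQ (mf x)
      ≤ ∑ x ∈ A, (mcQ TT + ∑ t ∈ (Ico 51 TT).filter (fun t => mf x ≤ t), (mcQ t - mcQ (t+1))) :=
        Finset.sum_le_sum point
    _ = A.card * mcQ TT
        + ∑ x ∈ A, ∑ t ∈ Ico 51 TT, (if mf x ≤ t then (mcQ t - mcQ (t+1)) else 0) := by
        rw [Finset.sum_add_distrib, Finset.sum_const, nsmul_eq_mul]
        congr 1
        exact Finset.sum_congr rfl (fun x _ => by rw [Finset.sum_filter])
    _ = A.card * mcQ TT
        + ∑ t ∈ Ico 51 TT, ((A.filter (fun x => mf x ≤ t)).card : ℚ) * (mcQ t - mcQ (t+1)) := by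
        congr 1
        rw [Finset.sum_comm]
        refine Finset.sum_congr rfl (fun t _ => ?_)
        rw [← Finset.sum_filter, Finset.sum_const, nsmul_eq_mul]
    _ ≤ (4*TT+3 : ℚ) * mcQ TT + ∑ t ∈ Ico 51 TT, (mcQ t - mcQ (t+1)) * (4*t+3) := by
        apply add_le_add
        · exact mul_le_mul_of_nonneg_right hAcard (le_of_lt (mcQ_pos TT))
        · refine Finset.sum_le_sum (fun t _ => ?_)
          rw [mul_comm]
          exact mul_le_mul_of_nonneg_left (hcount t) (mcQ_step_nonneg t)
    _ = 239 * mcQ 51 - 36 * mcQ (TT+1) := mcQ_H hT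
    _ ≤ 239 * mcQ 51 := by linarith [mcQ_pos (TT+1)]

lemma mcQ_final : 239 * mcQ 51 < 1 := by
  unfold mcQ
  rw [div_pow]
  rw [show (239:ℚ) * (2/3 * (8^51/9^51)) = (478 * 8^51)/(3 * 9^51) by ring]
  rw [div_lt_one (by positivity)]
  norm_num

-- pointwise: for a bad colouring, the weight is at least 2^(d/2+1)
lemma bad_weight {V : Type*} [Fintype V] [DecidableEq V] (T : V → V → Prop) [DecidableRel T]
    (x : V) (c : V → Fin 3)
    (hbad : (univ.filter (fun y => T x y)).card
      < 2 * (univ.filter (fun y => T x y ∧ c y = c x)).card) :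
    2 ^ ((univ.filter (fun y => T x y)).card / 2 + 1)
      ≤ ∏ y ∈ univ.filter (fun y => T x y), (if c y = c x then 2 else (1:ℕ)) := by
  classical
  set N := univ.filter (fun y => T x y) with hN
  have hsplit : (∏ y ∈ N.filter (fun y => c y = c x), (if c y = c x then 2 else (1:ℕ)))
      * ∏ y ∈ N.filter (fun y => ¬ (c y = c x)), (if c y = c x then 2 else (1:ℕ))
      = ∏ y ∈ N, (if c y = c x then 2 else (1:ℕ)) :=
    Finset.prod_filter_mul_prod_filter_not N _ _
  have h1 : ∏ y ∈ N.filter (fun y => c y = c x), (if c y = c x then 2 else (1:ℕ))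
      = 2 ^ (N.filter (fun y => c y = c x)).card := by
    rw [Finset.prod_congr rfl (fun y hy => if_pos (Finset.mem_filter.mp hy).2),
      Finset.prod_const]
  have h2 : ∏ y ∈ N.filter (fun y => ¬ (c y = c x)), (if c y = c x then 2 else (1:ℕ)) = 1 := by
    rw [Finset.prod_congr rfl (fun y hy => if_neg (Finset.mem_filter.mp hy).2)]
    exact Finset.prod_const_one
  have hmatch : (univ.filter (fun y => T x y ∧ c y = c x)).card
      = (N.filter (fun y => c y = c x)).card := by
    congr 1
    rw [hN, Finset.filter_filter]
  rw [← hsplit, h1, h2, mul_one]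
  apply Nat.pow_le_pow_right (by norm_num)
  rw [hmatch] at hbad
  omega

-- the per-vertex Q-bound, in ℚ
lemma q_bound (d n : ℕ) (hd : d + 1 ≤ n) :
    (3 * (4 ^ d * 3 ^ (n - 1 - d)) : ℚ)
      ≤ 3 ^ n * mcQ (d/2) * 2 ^ (d/2 + 1) := by
  unfold mcQ
  set m := d / 2 with hm
  set e := n - 1 - d with he
  have hn : n = e + d + 1 := by omega
  have key : (3:ℚ) * 4 ^ d * 9 ^ m ≤ 3 ^ d * 2 * 2 ^ (m+1) * 8 ^ m := by
    have hcase : d = 2*m ∨ d = 2*m+1 := by omega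
    have e5 : (2:ℚ)^m * 8^m = 16^m := by rw [← mul_pow]; norm_num
    rcases hcase with h | h <;> rw [h]
    · have e1 : (4:ℚ)^(2*m) = 16^m := by rw [pow_mul]; norm_num
      have e2 : (3:ℚ)^(2*m) = 9^m := by rw [pow_mul]; norm_num
      have e4 : (2:ℚ)^(m+1) = 2*2^m := by rw [pow_succ]; ring
      rw [e1, e2, e4]
      nlinarith [e5, pow_pos (show (0:ℚ) < 9 by norm_num) m, pow_pos (show (0:ℚ) < 16 by norm_num) m]
    · have e1 : (4:ℚ)^(2*m+1) = 4 * 16^m := by rw [pow_succ, pow_mul]; ring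
      have e2 : (3:ℚ)^(2*m+1) = 3 * 9^m := by rw [pow_succ, pow_mul]; ring
      have e4 : (2:ℚ)^(m+1) = 2*2^m := by rw [pow_succ]; ring
      rw [e1, e2, e4]
      nlinarith [e5, pow_pos (show (0:ℚ) < 9 by norm_num) m, pow_pos (show (0:ℚ) < 16 by norm_num) m]
  have h3n : (3:ℚ)^n = 3^e * 3^d * 3 := by
    rw [hn, pow_succ, pow_add]
  have h9 : ((8:ℚ)/9)^m = 8^m / 9^m := div_pow 8 9 m
  rw [h3n, h9]
  have hrhs : (3:ℚ)^e * 3^d * 3 * ((2/3) * (8^m/9^m)) * 2^(m+1)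
      = 3^e * ((3^d * 2 * 2^(m+1) * 8^m) / 9^m) := by
    field_simp
  rw [hrhs]
  have hlhs : (3:ℚ) * (4^d * 3^e) = 3^e * (3 * 4^d) := by ring
  rw [hlhs]
  apply mul_le_mul_of_nonneg_left _ (by positivity)
  rw [le_div_iff₀ (by positivity)]
  linarith [key]



/-- Every tournament can be 3-coloured so that all but at most 205 vertices receive
the same colour as at most half of their out-neighbours. -/
theorem tournament_almost_majority_three_colouring
    {V : Type*} [Fintype V] [DecidableEq V] (T : V → V → Prop) [DecidableRel T]
    (hirr : ∀ v, ¬ T v v) (htot : ∀ u v : V, u ≠ v → (T u v ↔ ¬ T v u)) :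
    ∃ c : V → Fin 3,
      (Finset.univ.filter (fun x : V =>
        (Finset.univ.filter (fun y => T x y)).card <
          2 * (Finset.univ.filter (fun y => T x y ∧ c y = c x)).card)).card ≤ 205 := by
  classical
  set n := Fintype.card V with hn
  set dg : V → ℕ := fun x => (univ.filter (fun y => T x y)).card with hdg
  set mt : V → (V → Fin 3) → ℕ := fun x c => (univ.filter (fun y => T x y ∧ c y = c x)).card
    with hmt
  set A : Finset V := univ.filter (fun x => 102 ≤ dg x) with hA
  have hdn : ∀ x : V, dg x + 1 ≤ n := by
    intro x
    have hx : x ∉ univ.filter (fun y => T x y) := by simp [hirr x]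
    have : (insert x (univ.filter (fun y => T x y))).card ≤ (univ : Finset V).card :=
      Finset.card_le_card (Finset.subset_univ _)
    rw [Finset.card_insert_of_notMem hx] at this
    simpa [hn, hdg] using this
  -- main claim: some colouring has no bad vertex of large out-degree
  have hex : ∃ c : V → Fin 3, ∀ x ∈ A, ¬ (dg x < 2 * mt x c) := by
    by_contra hno
    push_neg at hno
    -- per-vertex bad-colouring count bound
    have h4 : ∀ x ∈ A, ((univ.filter (fun c : V → Fin 3 => dg x < 2 * mt x c)).card : ℚ)
        ≤ 3 ^ n * mcQ (dg x / 2) := by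
      intro x hx
      have hxx : ¬ T x x := hirr x
      have hcount : (univ.filter (fun c : V → Fin 3 => dg x < 2 * mt x c)).card
          * 2 ^ (dg x / 2 + 1)
          ≤ 3 * (4 ^ dg x * 3 ^ (n - 1 - dg x)) := by
        calc (univ.filter (fun c : V → Fin 3 => dg x < 2 * mt x c)).card * 2 ^ (dg x / 2 + 1)
            ≤ ∑ c ∈ univ.filter (fun c : V → Fin 3 => dg x < 2 * mt x c),
                ∏ y ∈ univ.filter (fun y => T x y), (if c y = c x then 2 else (1:ℕ)) := by
              calc (univ.filter (fun c : V → Fin 3 => dg x < 2 * mt x c)).card * 2 ^ (dg x / 2 + 1)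
                  = ∑ _c ∈ univ.filter (fun c : V → Fin 3 => dg x < 2 * mt x c),
                      2 ^ (dg x / 2 + 1) := by rw [Finset.sum_const, smul_eq_mul]
                _ ≤ _ := Finset.sum_le_sum (fun c hc =>
                    bad_weight T x c (by simpa [hdg, hmt] using (Finset.mem_filter.mp hc).2))
          _ ≤ ∑ c : V → Fin 3,
                ∏ y ∈ univ.filter (fun y => T x y), (if c y = c x then 2 else (1:ℕ)) :=
              Finset.sum_le_sum_of_subset (Finset.subset_univ _)
          _ = 3 * (4 ^ dg x * 3 ^ (n - 1 - dg x)) := count_identity T x hxx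
      have hq := q_bound (dg x) n (hdn x)
      have hcast : ((univ.filter (fun c : V → Fin 3 => dg x < 2 * mt x c)).card : ℚ)
          * 2 ^ (dg x / 2 + 1) ≤ 3 * (4 ^ dg x * 3 ^ (n - 1 - dg x)) := by
        exact_mod_cast hcount
      have h2pos : (0:ℚ) < 2 ^ (dg x / 2 + 1) := by positivity
      exact le_of_mul_le_mul_right (hcast.trans hq) h2pos
    -- double counting
    have hswap : ∑ c : V → Fin 3, ((A.filter (fun x => dg x < 2 * mt x c)).card : ℚ)
        = ∑ x ∈ A, ((univ.filter (fun c : V → Fin 3 => dg x < 2 * mt x c)).card : ℚ) := by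
      have : ∑ c : V → Fin 3, (A.filter (fun x => dg x < 2 * mt x c)).card
          = ∑ x ∈ A, (univ.filter (fun c : V → Fin 3 => dg x < 2 * mt x c)).card := by
        simp only [Finset.card_filter]
        exact Finset.sum_comm
      exact_mod_cast congrArg (Nat.cast : ℕ → ℚ) this
    have hlow : (3:ℚ) ^ n ≤ ∑ c : V → Fin 3, ((A.filter (fun x => dg x < 2 * mt x c)).card : ℚ) := by
      have : ∀ c : V → Fin 3, (1:ℚ) ≤ ((A.filter (fun x => dg x < 2 * mt x c)).card : ℚ) := by
        intro c
        obtain ⟨x, hxA, hxb⟩ := hno c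
        have : x ∈ A.filter (fun x => dg x < 2 * mt x c) := Finset.mem_filter.mpr ⟨hxA, hxb⟩
        have := Finset.card_pos.mpr ⟨x, this⟩
        exact_mod_cast this
      calc (3:ℚ) ^ n = ∑ _c : V → Fin 3, (1:ℚ) := by
            rw [Finset.sum_const, Finset.card_univ, Fintype.card_fun]
            simp [hn]
        _ ≤ _ := Finset.sum_le_sum (fun c _ => this c)
    have hupp : ∑ x ∈ A, ((univ.filter (fun c : V → Fin 3 => dg x < 2 * mt x c)).card : ℚ)
        ≤ 3 ^ n * (239 * mcQ 51) := by
      calc ∑ x ∈ A, ((univ.filter (fun c : V → Fin 3 => dg x < 2 * mt x c)).card : ℚ)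
          ≤ ∑ x ∈ A, 3 ^ n * mcQ (dg x / 2) := Finset.sum_le_sum h4
        _ = 3 ^ n * ∑ x ∈ A, mcQ (dg x / 2) := by rw [Finset.mul_sum]
        _ ≤ 3 ^ n * (239 * mcQ 51) := by
            apply mul_le_mul_of_nonneg_left _ (by positivity)
            apply sum_mcQ_bound A (fun x => dg x / 2) ?_ ?_ (n + 51) (by omega) ?_
            · intro x hx
              have h102 : 102 ≤ dg x := by simpa [hA] using (Finset.mem_filter.mp hx).2
              show 51 ≤ dg x / 2
              omega
            · intro t
              have hsub : A.filter (fun x => dg x / 2 ≤ t) ⊆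
                  univ.filter (fun x => dg x ≤ 2 * t + 1) := by
                intro x hx
                rcases Finset.mem_filter.mp hx with ⟨hx1, hx2⟩
                exact Finset.mem_filter.mpr ⟨Finset.mem_univ x, by omega⟩
              have := (Finset.card_le_card hsub).trans
                (tourn_deg_bound T hirr htot (2 * t + 1))
              have h2 : (A.filter (fun x => dg x / 2 ≤ t)).card ≤ 4 * t + 3 := by omega
              exact_mod_cast h2
            · have : A.card ≤ n := by
                have := Finset.card_le_card (Finset.subset_univ A)
                simpa [hn] using this
              have h2 : A.card ≤ 4 * (n + 51) + 3 := by omega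
              exact_mod_cast h2
    have hfin : (3:ℚ) ^ n * (239 * mcQ 51) < 3 ^ n * 1 := by
      apply mul_lt_mul_of_pos_left mcQ_final (by positivity)
    rw [mul_one] at hfin
    have := hlow.trans (hswap.trans_le hupp)
    linarith
  obtain ⟨c, hc⟩ := hex
  refine ⟨c, ?_⟩
  have hsub : univ.filter (fun x : V =>
      (univ.filter (fun y => T x y)).card <
        2 * (univ.filter (fun y => T x y ∧ c y = c x)).card)
      ⊆ univ.filter (fun x => dg x ≤ 101) := by
    intro x hx
    rcases Finset.mem_filter.mp hx with ⟨_, hx2⟩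
    refine Finset.mem_filter.mpr ⟨Finset.mem_univ x, ?_⟩
    by_contra hcon
    push_neg at hcon
    exact hc x (Finset.mem_filter.mpr ⟨Finset.mem_univ x, by omega⟩) (by simpa [hdg, hmt] using hx2)
  calc (univ.filter (fun x : V =>
      (univ.filter (fun y => T x y)).card <
        2 * (univ.filter (fun y => T x y ∧ c y = c x)).card)).card
      ≤ (univ.filter (fun x => dg x ≤ 101)).card := Finset.card_le_card hsub
    _ ≤ 2 * 101 + 1 := tourn_deg_bound T hirr htot 101
    _ ≤ 205 := by norm_num
end

section
/- If each vertex of a tournament is coloured independently and uniformly at random with one of 3 colours, then the expected number of vertices x for which more than d^+(x)/2 of the out-neighbours of x receive the same colour as x is less than 206. -/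
/-!
Instead of a Chernoff bound we use the exponential moment directly. Let `x` have out-degree `d`
and let `s` be the number of out-neighbours coloured like `x`. For `θ ≥ 1`, `x` is bad only if
`θ ^ (d + 1) ≤ θ ^ (2 s)`, and the sum of `θ ^ (2 s)` over all colourings factorises over the
vertices to `3 ^ (n - d) * (θ ^ 2 + 2) ^ d`. Taking `θ = 3/2` (close to the optimal `√2`), `x` is
bad for at most `(2/3) (17/18)^d 3^n` colourings.

In a tournament the arcs inside a set of `k` vertices of out-degree at most `t` number
`k (k - 1) / 2 ≤ k t`, so at most `2 t + 1` vertices have out-degree `≤ t`. Listing the vertices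
by increasing out-degree, the `k`-th one therefore has out-degree at least `k / 2`, whence
`∑ₓ (17/18)^d(x) ≤ ∑ₖ (35/36)^k ≤ 36` and the expected number of bad vertices is at most `24`.
-/

open Finset

section Colourings

variable {V α : Type*} [Fintype V] [DecidableEq V] [Fintype α] [DecidableEq α]

lemma prod_ite_eq_ite_mem {R : Type*} [CommMonoid R] {x : V} {N : Finset V} (hx : x ∉ N)
    (P B : R) (f : V → R) :
    ∏ v, (if v = x then P else if v ∈ N then f v else B) =
      P * (∏ v ∈ N, f v) * B ^ (Fintype.card V - #N - 1) := by
  rw [Fintype.prod_eq_mul_prod_compl x, if_pos rfl, mul_assoc]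
  congr 1
  rw [prod_congr rfl fun v hv => if_neg (by simpa using hv), prod_ite]
  have hN : ({x}ᶜ : Finset V).filter (· ∈ N) = N := by
    ext v; simp only [mem_filter, mem_compl, mem_singleton]; grind
  have hc : #(({x}ᶜ : Finset V).filter (· ∉ N)) = Fintype.card V - #N - 1 := by
    rw [filter_not, hN, card_sdiff_of_subset (by simpa [subset_iff] using hx), card_compl,
      card_singleton]
    omega
  rw [hN, prod_const, hc]

lemma sum_ite_eq_add_card_sub_one {R : Type*} [AddCommMonoidWithOne R] (a : α) (w : R) :
    ∑ b, (if b = a then w else 1) = w + ((Fintype.card α - 1 : ℕ) : R) := by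
  rw [Fintype.sum_eq_add_sum_compl a, if_pos rfl,
    sum_congr rfl fun b hb => if_neg (by simpa using hb)]
  simp [card_compl]

lemma sum_pow_card_filter_eq_apply {R : Type*} [CommSemiring R] {x : V} {N : Finset V}
    (hx : x ∉ N) (w : R) :
    ∑ c : V → α, w ^ #{y ∈ N | c y = c x} =
      (Fintype.card α : R) ^ (Fintype.card V - #N) *
        (w + ((Fintype.card α - 1 : ℕ) : R)) ^ #N := by
  -- Splitting by the colour `a` of `x` makes the summand a product over `v` of functions of
  -- `c v` alone, so that the sum over colourings factorises.
  set h : α → V → α → R := fun a v b =>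
    if v = x then (if b = a then 1 else 0) else if v ∈ N then (if b = a then w else 1) else 1
  have hsplit (c : V → α) : w ^ #{y ∈ N | c y = c x} = ∑ a, ∏ v, h a v (c v) := by
    have hprod (a : α) : ∏ v, h a v (c v) =
        (if c x = a then 1 else 0) * ∏ v ∈ N, (if c v = a then w else 1) := by
      rw [← mul_one (_ * _), ← one_pow (Fintype.card V - #N - 1), ← prod_ite_eq_ite_mem hx]
      refine prod_congr rfl fun v _ => ?_
      by_cases hv : v = x
      · subst hv; simp [h]
      · simp [h, hv]
    simp only [hprod, ite_mul, one_mul, zero_mul, sum_ite_eq, mem_univ, if_true, prod_ite,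
      prod_const, one_pow, mul_one]
  have hfactor (a : α) (v : V) : ∑ b, h a v b =
      if v = x then 1 else if v ∈ N then w + ((Fintype.card α - 1 : ℕ) : R)
        else Fintype.card α := by
    by_cases hv : v = x
    · simp [h, hv]
    · by_cases hvN : v ∈ N
      · simp only [h, hv, hvN, if_false, if_true, sum_ite_eq_add_card_sub_one]
      · simp [h, hv, hvN]
  obtain ⟨m, hm⟩ : ∃ m, Fintype.card V - #N = m + 1 :=
    Nat.exists_eq_add_one.2 (Nat.sub_pos_of_lt (card_lt_univ_of_notMem hx))
  calc ∑ c : V → α, w ^ #{y ∈ N | c y = c x}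
      = ∑ a, ∑ c : V → α, ∏ v, h a v (c v) := by
        rw [sum_comm]; exact sum_congr rfl fun c _ => hsplit c
    _ = ∑ a : α, ∏ v, ∑ b, h a v b := by simp only [Fintype.prod_sum]
    _ = _ := by
      simp only [hfactor, prod_ite_eq_ite_mem hx, prod_const, sum_const, card_univ, nsmul_eq_mul]
      rw [hm, Nat.add_sub_cancel, pow_succ]
      ring

lemma card_filter_lt_two_mul_card_mul_pow_le {R : Type*} [CommSemiring R] [PartialOrder R]
    [IsOrderedRing R] {x : V} {N : Finset V} (hx : x ∉ N) {θ : R} (hθ : 1 ≤ θ) :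
    (#{c : V → α | #N < 2 * #{y ∈ N | c y = c x}} : R) * θ ^ (#N + 1) ≤
      (Fintype.card α : R) ^ (Fintype.card V - #N) *
        (θ ^ 2 + ((Fintype.card α - 1 : ℕ) : R)) ^ #N := by
  rw [← sum_pow_card_filter_eq_apply hx, ← nsmul_eq_mul, ← sum_const]
  calc ∑ _c ∈ {c : V → α | #N < 2 * #{y ∈ N | c y = c x}}, θ ^ (#N + 1)
      ≤ ∑ c ∈ {c : V → α | #N < 2 * #{y ∈ N | c y = c x}}, (θ ^ 2) ^ #{y ∈ N | c y = c x} :=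
        sum_le_sum fun c hc => by
          rw [← pow_mul]; exact pow_le_pow_right₀ hθ (mem_filter.1 hc).2
    _ ≤ ∑ c : V → α, (θ ^ 2) ^ #{y ∈ N | c y = c x} :=
        sum_le_sum_of_subset_of_nonneg (subset_univ _) fun _ _ _ =>
          pow_nonneg (pow_nonneg (zero_le_one.trans hθ) _) _

lemma card_filter_lt_two_mul_card_le {x : V} {N : Finset V} (hx : x ∉ N) :
    (#{c : V → Fin 3 | #N < 2 * #{y ∈ N | c y = c x}} : ℝ) ≤
      2 / 3 * 3 ^ Fintype.card V * (17 / 18) ^ #N := by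
  have h := card_filter_lt_two_mul_card_mul_pow_le (α := Fin 3) hx (θ := (3 : ℝ) / 2)
    (by norm_num)
  have hsplit : (3 : ℝ) ^ Fintype.card V = 3 ^ (Fintype.card V - #N) * 3 ^ #N := by
    rw [← pow_add, Nat.sub_add_cancel (card_le_univ N)]
  refine le_of_mul_le_mul_right (h.trans_eq ?_) (by positivity : (0 : ℝ) < (3 / 2) ^ (#N + 1))
  rw [hsplit, show ((3 : ℝ) / 2) ^ 2 + ((Fintype.card (Fin 3) - 1 : ℕ) : ℝ) =
    3 * (17 / 18) * (3 / 2) by norm_num, Fintype.card_fin, mul_pow, mul_pow]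
  push_cast
  ring

end Colourings

section Tournament

variable {V : Type*} [DecidableEq V] {T : V → V → Prop} [DecidableRel T]

lemma two_mul_sum_card_filter_eq (hirr : ∀ v, ¬ T v v)
    (htot : ∀ u v : V, u ≠ v → (T u v ↔ ¬ T v u)) (s : Finset V) :
    2 * ∑ x ∈ s, #{y ∈ s | T x y} = #s * (#s - 1) := by
  have hpair (x y : V) : (if T x y then 1 else 0) + (if T y x then 1 else 0) =
      if x = y then 0 else 1 := by
    by_cases hxy : x = y
    · subst hxy; simp [hirr]
    · by_cases h : T x y
      · simp [hxy, h, (htot x y hxy).1 h]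
      · simp [hxy, h, (htot y x (Ne.symm hxy)).2 h]
  calc 2 * ∑ x ∈ s, #{y ∈ s | T x y}
      = ∑ x ∈ s, ∑ y ∈ s, ((if T x y then 1 else 0) + (if T y x then 1 else 0)) := by
        simp only [card_filter, sum_add_distrib, two_mul]
        rw [sum_comm (f := fun x y => if T y x then 1 else 0)]
    _ = ∑ x ∈ s, (#s - 1) := sum_congr rfl fun x hx => by
        simp [hpair, sum_ite, filter_ne, hx]
    _ = #s * (#s - 1) := by rw [sum_const, smul_eq_mul]

lemma card_filter_card_filter_le_le [Fintype V] (hirr : ∀ v, ¬ T v v)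
    (htot : ∀ u v : V, u ≠ v → (T u v ↔ ¬ T v u)) (t : ℕ) :
    #{x | #{y | T x y} ≤ t} ≤ 2 * t + 1 := by
  set s : Finset V := {x | #{y | T x y} ≤ t}
  have hs : #s * (#s - 1) ≤ #s * (2 * t) := by
    rw [← two_mul_sum_card_filter_eq hirr htot, mul_left_comm, ← smul_eq_mul (a := #s),
      ← sum_const]
    refine Nat.mul_le_mul_left 2 (sum_le_sum fun x hx => ?_)
    exact (card_le_card (filter_subset_filter _ (subset_univ s))).trans (mem_filter.1 hx).2
  rcases Nat.eq_zero_or_pos #s with h0 | hpos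
  · omega
  · have := Nat.le_of_mul_le_mul_left hs hpos
    omega

end Tournament

lemma sum_pow_two_mul_le_geom_sum {ι R : Type*} [DecidableEq ι] [Semiring R] [PartialOrder R]
    [IsOrderedRing R] (s : Finset ι) (f : ι → ℕ) {r : R} (hr0 : 0 ≤ r) (hr1 : r ≤ 1)
    (hf : ∀ t, #{x ∈ s | f x ≤ t} ≤ 2 * t + 1) :
    ∑ x ∈ s, r ^ (2 * f x) ≤ ∑ k ∈ range #s, r ^ k := by
  induction s using Finset.induction_on_max_value f with
  | empty => simp
  | insert a s ha hmax ih =>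
    have hcard : #s + 1 ≤ 2 * f a + 1 := by
      calc #s + 1 = #{x ∈ insert a s | f x ≤ f a} := by
            rw [filter_true_of_mem fun x hx => ?_, card_insert_of_notMem ha]
            rcases mem_insert.1 hx with rfl | hx
            · exact le_rfl
            · exact hmax x hx
        _ ≤ 2 * f a + 1 := hf (f a)
    rw [sum_insert ha, card_insert_of_notMem ha, sum_range_succ, add_comm]
    refine add_le_add (ih fun t => (card_le_card ?_).trans (hf t)) ?_
    · exact filter_subset_filter _ (subset_insert a s)
    · exact pow_le_pow_of_le_one hr0 hr1 (by omega)

/-- If each vertex of a tournament is coloured independently and uniformly at random with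
one of 3 colours, the expected number of bad vertices is less than 206; equivalently,
summing the number of bad vertices over all 3-colourings gives less than 206 · 3^|V|. -/
theorem tournament_expected_bad_lt
    {V : Type*} [Fintype V] [DecidableEq V] (T : V → V → Prop) [DecidableRel T]
    (hirr : ∀ v, ¬ T v v) (htot : ∀ u v : V, u ≠ v → (T u v ↔ ¬ T v u)) :
    ∑ c : V → Fin 3,
      ((Finset.univ.filter (fun x : V =>
        (Finset.univ.filter (fun y => T x y)).card <
          2 * (Finset.univ.filter (fun y => T x y ∧ c y = c x)).card)).card : ℝ)
      < 206 * 3 ^ Fintype.card V := by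
  have hvertex (x : V) : (#{c : V → Fin 3 | #{y | T x y} < 2 * #{y | T x y ∧ c y = c x}} : ℝ) ≤
      2 / 3 * 3 ^ Fintype.card V * (17 / 18) ^ #{y | T x y} := by
    simpa only [filter_filter] using
      card_filter_lt_two_mul_card_le (N := ({y | T x y} : Finset V)) (by simp [hirr x])
  have hgeom : ∑ x, ((35 : ℝ) / 36) ^ (2 * #{y | T x y}) ≤ 36 := by
    refine (sum_pow_two_mul_le_geom_sum univ _ (by norm_num) (by norm_num)
      (by simpa using card_filter_card_filter_le_le hirr htot)).trans ?_
    rw [range_eq_Ico]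
    exact (geom_sum_Ico_le_of_lt_one (by norm_num) (by norm_num)).trans_eq (by norm_num)
  calc ∑ c : V → Fin 3, (#{x | #{y | T x y} < 2 * #{y | T x y ∧ c y = c x}} : ℝ)
      = ∑ x, (#{c : V → Fin 3 | #{y | T x y} < 2 * #{y | T x y ∧ c y = c x}} : ℝ) := by
        exact_mod_cast sum_card_bipartiteAbove_eq_sum_card_bipartiteBelow (s := univ) (t := univ)
          fun (c : V → Fin 3) x => #{y | T x y} < 2 * #{y | T x y ∧ c y = c x}
    _ ≤ ∑ x, 2 / 3 * 3 ^ Fintype.card V * ((35 : ℝ) / 36) ^ (2 * #{y | T x y}) := by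
        refine sum_le_sum fun x _ => (hvertex x).trans ?_
        rw [pow_mul]
        gcongr
        norm_num
    _ ≤ 2 / 3 * 3 ^ Fintype.card V * 36 := by
        rw [← mul_sum]
        gcongr
    _ < 206 * 3 ^ Fintype.card V := by
        linarith [pow_pos (by norm_num : (0 : ℝ) < 3) (Fintype.card V)]
end

section
/- Let A = (a_{ij}) be an n x n real matrix with a_{ii} = 0, a_{ij} >= 0 for i ≠ j, and all row sums at most 1. Let m be a positive integer and let L_1, ..., L_n be subsets of N each of size m. Then there is a function f : {1, ..., n} -> N with f(i) in L_i for each i, such that for every i, writing r = f(i), the sum over j with f(j) = r of a_{ij} is at most 2/m. -/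
open Finset

lemma step {n m : ℕ} (hm : 0 < m)
    (A : Fin n → Fin n → ℝ)
    (hdiag : ∀ i, A i i = 0) (hA : ∀ i j, 0 ≤ A i j)
    (hrow : ∀ i, ∑ j, A i j ≤ 1)
    (L : Fin n → Finset ℕ) (hL : ∀ i, (L i).card = m)
    (w : Fin n → ℝ) (hw : ∀ i, 0 < w i) (δ : ℝ)
    (hAw : ∀ i, ∑ j, w j * A j i ≤ (1 + δ) * w i) :
    ∃ f ∈ Fintype.piFinset L, ∀ i,
      ∑ j ∈ Finset.univ.filter (fun j => f j = f i), A i j ≤ (2 + δ) / m := by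
  classical
  set Φ : (Fin n → ℕ) → ℝ :=
    fun h => ∑ i, ∑ j, if h j = h i then w i * A i j else 0 with hΦ
  have hne : (Fintype.piFinset L).Nonempty := by
    rw [Fintype.piFinset_nonempty]
    intro a
    rw [← Finset.card_pos, hL a]; exact hm
  obtain ⟨f, hf, hmin⟩ := Finset.exists_min_image (Fintype.piFinset L) Φ hne
  refine ⟨f, hf, ?_⟩
  intro i
  set S : ℕ → ℝ := fun c => ∑ j ∈ univ.erase i, if f j = c then A i j else 0 with hS
  set T : ℕ → ℝ := fun c => ∑ j ∈ univ.erase i, if f j = c then w j * A j i else 0 with hT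
  set R : ℝ := ∑ i' ∈ univ.erase i, ∑ j ∈ univ.erase i,
      if f j = f i' then w i' * A i' j else 0 with hR
  have hdecomp : ∀ c : ℕ, Φ (Function.update f i c) = w i * S c + T c + R := by
    intro c
    have inner : ∀ i' : Fin n,
        (∑ j, if Function.update f i c j = Function.update f i c i' then w i' * A i' j else 0)
        = (∑ j ∈ univ.erase i, if f j = Function.update f i c i' then w i' * A i' j else 0)
          + (if c = Function.update f i c i' then w i' * A i' i else 0) := by
      intro i'
      rw [← Finset.sum_erase_add _ _ (mem_univ i), Function.update_self]
      congr 1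
      refine Finset.sum_congr rfl fun j hj => ?_
      rw [Function.update_of_ne (mem_erase.mp hj).1]
    show (∑ i', ∑ j, if Function.update f i c j = Function.update f i c i' then w i' * A i' j else 0) = _
    rw [Finset.sum_congr rfl fun i' _ => inner i']
    rw [← Finset.sum_erase_add _ _ (mem_univ i), Function.update_self]
    have e1 : ∀ i' ∈ univ.erase i,
        ((∑ j ∈ univ.erase i, if f j = Function.update f i c i' then w i' * A i' j else 0)
          + (if c = Function.update f i c i' then w i' * A i' i else 0))
        = (∑ j ∈ univ.erase i, if f j = f i' then w i' * A i' j else 0)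
          + (if f i' = c then w i' * A i' i else 0) := by
      intro i' hi'
      rw [Function.update_of_ne (mem_erase.mp hi').1]
      congr 1
      exact if_congr (eq_comm) rfl rfl
    rw [Finset.sum_congr rfl e1, Finset.sum_add_distrib]
    have e2 : (if c = c then w i * A i i else 0) = 0 := by
      rw [if_pos rfl, hdiag, mul_zero]
    rw [e2, add_zero]
    have e3 : (∑ j ∈ univ.erase i, if f j = c then w i * A i j else 0) = w i * S c := by
      rw [hS, Finset.mul_sum]
      exact Finset.sum_congr rfl fun j _ => by rw [mul_ite, mul_zero]
    rw [e3, hR, hT]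
    ring
  have hupdate_self : Function.update f i (f i) = f := Function.update_eq_self i f
  have hkey : ∀ c ∈ L i, w i * S (f i) + T (f i) ≤ w i * S c + T c := by
    intro c hc
    have hmem : Function.update f i c ∈ Fintype.piFinset L := by
      rw [Fintype.mem_piFinset] at hf ⊢
      intro a
      rcases eq_or_ne a i with rfl | h
      · simpa using hc
      · rw [Function.update_of_ne h]; exact hf a
    have h1 : Φ f ≤ Φ (Function.update f i c) := hmin _ hmem
    have h2 := hdecomp c
    have h3 := hdecomp (f i)
    rw [hupdate_self] at h3
    linarith
  have h4 : (m : ℝ) * (w i * S (f i) + T (f i)) ≤ ∑ c ∈ L i, (w i * S c + T c) := by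
    calc (m : ℝ) * (w i * S (f i) + T (f i))
        = ∑ _c ∈ L i, (w i * S (f i) + T (f i)) := by
          rw [Finset.sum_const, hL i, nsmul_eq_mul]
      _ ≤ ∑ c ∈ L i, (w i * S c + T c) := Finset.sum_le_sum hkey
  have h7 : ∑ c ∈ L i, S c ≤ 1 := by
    rw [hS]
    rw [Finset.sum_comm]
    have hb : ∀ j ∈ univ.erase i, (∑ c ∈ L i, if f j = c then A i j else 0) ≤ A i j := by
      intro j _
      rw [Finset.sum_ite_eq (L i) (f j)]
      split
      · exact le_refl _
      · exact hA i j
    calc (∑ j ∈ univ.erase i, ∑ c ∈ L i, if f j = c then A i j else 0)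
        ≤ ∑ j ∈ univ.erase i, A i j := Finset.sum_le_sum hb
      _ ≤ ∑ j, A i j := Finset.sum_le_sum_of_subset_of_nonneg (Finset.subset_univ _)
          (fun j _ _ => hA i j)
      _ ≤ 1 := hrow i
  have h8 : ∑ c ∈ L i, T c ≤ (1 + δ) * w i := by
    rw [hT, Finset.sum_comm]
    have hb : ∀ j ∈ univ.erase i, (∑ c ∈ L i, if f j = c then w j * A j i else 0) ≤ w j * A j i := by
      intro j _
      rw [Finset.sum_ite_eq (L i) (f j)]
      split
      · exact le_refl _
      · exact mul_nonneg (hw j).le (hA j i)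
    calc (∑ j ∈ univ.erase i, ∑ c ∈ L i, if f j = c then w j * A j i else 0)
        ≤ ∑ j ∈ univ.erase i, w j * A j i := Finset.sum_le_sum hb
      _ ≤ ∑ j, w j * A j i := Finset.sum_le_sum_of_subset_of_nonneg (Finset.subset_univ _)
          (fun j _ _ => mul_nonneg (hw j).le (hA j i))
      _ ≤ (1 + δ) * w i := hAw i
  have hsum : (m : ℝ) * (w i * S (f i) + T (f i)) ≤ (2 + δ) * w i := by
    have h6 : ∑ c ∈ L i, (w i * S c + T c) = w i * (∑ c ∈ L i, S c) + ∑ c ∈ L i, T c := by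
      rw [Finset.sum_add_distrib, Finset.mul_sum]
    nlinarith [hw i, h4, h7, h8]
  have hT0 : 0 ≤ T (f i) := by
    rw [hT]
    refine Finset.sum_nonneg fun j _ => ?_
    split
    · exact mul_nonneg (hw j).le (hA j i)
    · exact le_refl _
  have hgoal_eq : ∑ j ∈ Finset.univ.filter (fun j => f j = f i), A i j = S (f i) := by
    rw [Finset.sum_filter, ← Finset.sum_erase_add _ _ (mem_univ i), if_pos rfl, hdiag, add_zero, hS]
  rw [hgoal_eq]
  have hwi := hw i
  have hm' : (0 : ℝ) < m := by exact_mod_cast hm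
  rw [le_div_iff₀ hm']
  nlinarith [hT0, hsum, hwi]
open Finset

lemma weights {n : ℕ} (A : Fin n → Fin n → ℝ) (hA : ∀ i j, 0 ≤ A i j)
    (hrow : ∀ i, ∑ j, A i j ≤ 1) (δ : ℝ) (hδ : 0 < δ) :
    ∃ w : Fin n → ℝ, (∀ i, 0 < w i) ∧ ∀ i, ∑ j, w j * A j i ≤ (1 + δ) * w i := by
  classical
  set M : Matrix (Fin n) (Fin n) ℝ := Matrix.of A with hMdef
  have hM : ∀ i j, M i j = A i j := fun i j => rfl
  have hpnn : ∀ k (i j : Fin n), 0 ≤ (M ^ k) i j := by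
    intro k
    induction k with
    | zero => intro i j; rw [pow_zero, Matrix.one_apply]; split <;> norm_num
    | succ k ih =>
      intro i j
      rw [pow_succ, Matrix.mul_apply]
      exact Finset.sum_nonneg fun l _ => mul_nonneg (ih i l) (hA l j)
  have hprow : ∀ k (i : Fin n), ∑ j, (M ^ k) i j ≤ 1 := by
    intro k
    induction k with
    | zero =>
      intro i
      simp [Matrix.one_apply]
    | succ k ih =>
      intro i
      calc ∑ j, (M ^ (k+1)) i j = ∑ j, ∑ l, (M ^ k) i l * M l j := by
            simp [pow_succ, Matrix.mul_apply]
        _ = ∑ l, (M ^ k) i l * ∑ j, M l j := by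
            rw [Finset.sum_comm]
            exact Finset.sum_congr rfl fun l _ => by rw [Finset.mul_sum]
        _ ≤ ∑ l, (M ^ k) i l * 1 := Finset.sum_le_sum fun l _ =>
            mul_le_mul_of_nonneg_left (hrow l) (hpnn k i l)
        _ = ∑ l, (M ^ k) i l := by simp
        _ ≤ 1 := ih i
  have hentry : ∀ k (i j : Fin n), (M ^ k) i j ≤ 1 := fun k i j =>
    le_trans (Finset.single_le_sum (fun l _ => hpnn k i l) (mem_univ j)) (hprow k i)
  set col : ℕ → Fin n → ℝ := fun k i => ∑ j, (M ^ k) j i with hcoldef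
  have hcolnn : ∀ k i, 0 ≤ col k i := fun k i => Finset.sum_nonneg fun j _ => hpnn k j i
  have hcol : ∀ k (i : Fin n), col k i ≤ n := by
    intro k i
    calc col k i ≤ ∑ _j : Fin n, (1:ℝ) := Finset.sum_le_sum fun j _ => hentry k j i
      _ = n := by simp
  have hcol0 : ∀ i, col 0 i = 1 := by
    intro i
    simp [hcoldef, Matrix.one_apply]
  have h1δ : (0:ℝ) < 1 + δ := by linarith
  have hδ1 : (1:ℝ) < 1 + δ := by linarith
  set r : ℝ := (1 + δ)⁻¹ with hrdef
  have hr0 : 0 < r := inv_pos.mpr h1δ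
  obtain ⟨K, hK⟩ := pow_unbounded_of_one_lt (n : ℝ) hδ1
  refine ⟨fun i => ∑ k ∈ Finset.range (K + 1), r ^ k * col k i, ?_, ?_⟩
  · intro i
    have h0 : (0:ℝ) < r ^ 0 * col 0 i := by rw [pow_zero, hcol0]; norm_num
    have := Finset.single_le_sum
      (f := fun k => r ^ k * col k i)
      (fun k _ => mul_nonneg (pow_nonneg hr0.le k) (hcolnn k i))
      (Finset.mem_range.mpr (Nat.succ_pos K))
    dsimp only at this ⊢
    linarith
  · intro i
    have hkey : ∀ k, ∑ j, col k j * A j i = col (k + 1) i := by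
      intro k
      calc ∑ j, col k j * A j i = ∑ j, ∑ l, (M ^ k) l j * M j i := by
            refine Finset.sum_congr rfl fun j _ => ?_
            rw [Finset.sum_mul]
            rfl
        _ = ∑ l, ∑ j, (M ^ k) l j * M j i := Finset.sum_comm
        _ = col (k + 1) i := by
            refine Finset.sum_congr rfl fun l _ => ?_
            rw [pow_succ, Matrix.mul_apply]
    have expand : ∑ j, (∑ k ∈ Finset.range (K + 1), r ^ k * col k j) * A j i
        = ∑ k ∈ Finset.range (K + 1), r ^ k * col (k + 1) i := by
      calc ∑ j, (∑ k ∈ Finset.range (K + 1), r ^ k * col k j) * A j i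
          = ∑ j, ∑ k ∈ Finset.range (K + 1), r ^ k * col k j * A j i := by
            refine Finset.sum_congr rfl fun j _ => ?_
            rw [Finset.sum_mul]
        _ = ∑ k ∈ Finset.range (K + 1), ∑ j, r ^ k * col k j * A j i := Finset.sum_comm
        _ = ∑ k ∈ Finset.range (K + 1), r ^ k * col (k + 1) i := by
            refine Finset.sum_congr rfl fun k _ => ?_
            rw [← hkey k, Finset.mul_sum]
            exact Finset.sum_congr rfl fun j _ => by ring
    rw [expand]
    have hre : ∀ k : ℕ, (1 + δ) * r ^ (k + 1) = r ^ k := by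
      intro k
      rw [pow_succ']
      rw [← mul_assoc, mul_inv_cancel₀ (ne_of_gt h1δ), one_mul]
    have rhs : (1 + δ) * ∑ k ∈ Finset.range (K + 1), r ^ k * col k i
        = (∑ k ∈ Finset.range K, r ^ k * col (k + 1) i) + (1 + δ) := by
      rw [Finset.sum_range_succ']
      rw [mul_add, Finset.mul_sum]
      congr 1
      · refine Finset.sum_congr rfl fun k _ => ?_
        rw [← mul_assoc, hre k]
      · rw [pow_zero, hcol0, one_mul, mul_one]
    rw [rhs, Finset.sum_range_succ]
    have hlast : r ^ K * col (K + 1) i ≤ 1 + δ := by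
      have h1 : col (K + 1) i ≤ (1 + δ) ^ K := le_of_lt (lt_of_le_of_lt (hcol _ i) hK)
      have h2 : r ^ K * col (K + 1) i ≤ r ^ K * (1 + δ) ^ K :=
        mul_le_mul_of_nonneg_left h1 (pow_nonneg hr0.le K)
      have h3 : r ^ K * (1 + δ) ^ K = 1 := by
        rw [← mul_pow, inv_mul_cancel₀ (ne_of_gt h1δ), one_pow]
      linarith
    linarith

/-- List version of the Ball–Alon matrix partition lemma. -/
theorem matrix_partition_list_lemma (n m : ℕ) (hm : 0 < m)
    (A : Fin n → Fin n → ℝ)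
    (hdiag : ∀ i, A i i = 0) (hnn : ∀ i j, i ≠ j → 0 ≤ A i j)
    (hrow : ∀ i, ∑ j, A i j ≤ 1)
    (L : Fin n → Finset ℕ) (hL : ∀ i, (L i).card = m) :
    ∃ f : Fin n → ℕ, (∀ i, f i ∈ L i) ∧
      ∀ i, ∑ j ∈ Finset.univ.filter (fun j => f j = f i), A i j ≤ 2 / m := by
  classical
  have hA : ∀ i j, 0 ≤ A i j := by
    intro i j
    rcases eq_or_ne i j with rfl | h
    · rw [hdiag]
    · exact hnn i j h
  have hstep : ∀ t : ℕ, ∃ f ∈ Fintype.piFinset L, ∀ i,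
      ∑ j ∈ Finset.univ.filter (fun j => f j = f i), A i j ≤ (2 + 1/(t+1 : ℝ)) / m := by
    intro t
    have hδ : (0:ℝ) < 1/(t+1 : ℝ) := by positivity
    obtain ⟨w, hw, hAw⟩ := weights A hA hrow _ hδ
    exact step hm A hdiag hA hrow L hL w hw _ hAw
  choose g hg1 hg2 using hstep
  set G : ℕ → {f // f ∈ Fintype.piFinset L} := fun t => ⟨g t, hg1 t⟩ with hG
  obtain ⟨y, hy⟩ := Finite.exists_infinite_fiber G
  have hymem : ∀ i, y.1 i ∈ L i := by
    have := y.2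
    rw [Fintype.mem_piFinset] at this
    exact this
  refine ⟨y.1, hymem, fun i => ?_⟩
  refine le_of_forall_pos_le_add fun ε hε => ?_
  have hm' : (0:ℝ) < m := by exact_mod_cast hm
  have hinf : (G ⁻¹' {y}).Infinite := Set.infinite_coe_iff.mp hy
  obtain ⟨t0, ht0⟩ := exists_nat_gt (1 / (ε * m))
  obtain ⟨t, htmem, htgt⟩ := hinf.exists_gt t0
  have hGt : g t = y.1 := congrArg Subtype.val (htmem : G t = y)
  have hb := hg2 t i
  rw [hGt] at hb
  have hlt : 1 / (ε * m) < (t + 1 : ℝ) := by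
    have h1 : (t0 : ℝ) < t + 1 := by exact_mod_cast Nat.lt_succ_of_lt htgt
    linarith
  have h2 : (1 : ℝ) / (t + 1) < ε * m := by
    rw [div_lt_iff₀ (by positivity)] at hlt ⊢
    · nlinarith [mul_pos hε hm']
  have h3 : (2 + 1/(t+1 : ℝ)) / m ≤ 2 / m + ε := by
    rw [add_div]
    have : (1/(t+1 : ℝ)) / m ≤ ε := by
      rw [div_le_iff₀ hm']
      linarith
    linarith
  linarith
end

section
/- For every k >= 2, every finite digraph is 1/k-majority 2k-choosable: for any assignment of lists of 2k colours to the vertices, there is a colouring choosing each vertex's colour from its list such that each vertex has the same colour as at most a 1/k proportion of its out-neighbours. -/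
open Finset Matrix

section Weights

variable {V : Type*} [Fintype V] [DecidableEq V]

/-- For a "source SCC" `S` with hub `v0`, there exist positive rational weights `y` on `S`
with `∑_{u ∈ S, u → v} y u ≤ dS v * y v` for all `v ∈ S`, where `dS` is the internal
out-degree. -/
lemma exists_scc_weights (D : V → V → Prop) [DecidableRel D] (hirr : ∀ v, ¬ D v v)
    (S : Finset V) (v0 : V) (hv0 : v0 ∈ S)
    (hmem : ∀ u ∈ S, Relation.ReflTransGen D u v0 ∧ Relation.ReflTransGen D v0 u)
    (hstep : ∀ a ∈ S, ∀ x, D a x → Relation.ReflTransGen D x v0 → x ∈ S) :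
    ∃ y : V → ℚ, (∀ v ∈ S, 0 < y v) ∧
      ∀ v ∈ S, (∑ u ∈ S.filter (fun u => D u v), y u) ≤
        ((S.filter (fun w => D v w)).card : ℚ) * y v := by
  classical
  by_cases h2 : ∃ u ∈ S, u ≠ v0
  · -- |S| ≥ 2 : matrix argument
    have hdS : ∀ u ∈ S, 0 < (S.filter (fun w => D u w)).card := by
      intro u hu
      have key : ∃ x, D u x ∧ x ∈ S := by
        by_cases huv : u = v0
        · obtain ⟨u1, hu1, hu1ne⟩ := h2
          rcases (hmem u1 hu1).2.cases_head with h | ⟨x, hx, hxr⟩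
          · exact absurd h.symm hu1ne
          · subst huv
            have hxv0 : Relation.ReflTransGen D x u := hxr.trans (hmem u1 hu1).1
            exact ⟨x, hx, hstep u hu x hx hxv0⟩
        · rcases (hmem u hu).1.cases_head with h | ⟨x, hx, hxr⟩
          · exact absurd h huv
          · exact ⟨x, hx, hstep u hu x hx hxr⟩
      obtain ⟨x, hDx, hxS⟩ := key
      exact Finset.card_pos.mpr ⟨x, Finset.mem_filter.mpr ⟨hxS, hDx⟩⟩
    have hdSne : ∀ u ∈ S, (((S.filter (fun w => D u w)).card : ℚ)) ≠ 0 := by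
      intro u hu; exact_mod_cast (hdS u hu).ne'
    haveI : Nonempty {x // x ∈ S} := ⟨⟨v0, hv0⟩⟩
    let M : Matrix {x // x ∈ S} {x // x ∈ S} ℚ :=
      fun u x => if D u.1 x.1 then (((S.filter (fun w => D u.1 w)).card : ℚ))⁻¹ else 0
    have hMnn : ∀ u x, 0 ≤ M u x := by
      intro u x
      by_cases h : D u.1 x.1
      · simp only [M, if_pos h]
        positivity
      · simp only [M, if_neg h, le_refl]
    have hrow : ∀ u : {x // x ∈ S}, ∑ x : {x // x ∈ S}, M u x = 1 := by
      intro u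
      have : ∑ x : {x // x ∈ S}, M u x
          = ∑ x ∈ S, (if D u.1 x then (((S.filter (fun w => D u.1 w)).card : ℚ))⁻¹ else 0) :=
        Finset.sum_coe_sort S
          (fun a => if D u.1 a then (((S.filter (fun w => D u.1 w)).card : ℚ))⁻¹ else 0)
      rw [this, ← Finset.sum_filter, Finset.sum_const, nsmul_eq_mul]
      exact mul_inv_cancel₀ (hdSne u.1 u.2)
    have hdet : (M - 1).det = 0 := by
      rw [← Matrix.exists_mulVec_eq_zero_iff]
      refine ⟨fun _ => 1, fun h => one_ne_zero (congrFun h ⟨v0, hv0⟩), ?_⟩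
      funext u
      simp only [Matrix.mulVec, dotProduct, Matrix.sub_apply, mul_one, Pi.zero_apply]
      rw [Finset.sum_sub_distrib, hrow u]
      simp [Matrix.one_apply]
    obtain ⟨z, hz0, hzM⟩ := Matrix.exists_vecMul_eq_zero_iff.mpr hdet
    have hstatz : z ᵥ* M = z := by
      rwa [Matrix.vecMul_sub, Matrix.vecMul_one, sub_eq_zero] at hzM
    let w : {x // x ∈ S} → ℚ := fun u => |z u|
    have hwnn : ∀ u, 0 ≤ w u := fun u => abs_nonneg _
    have hle : ∀ x, w x ≤ ∑ u : {x // x ∈ S}, w u * M u x := by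
      intro x
      have h1 : z x = ∑ u : {x // x ∈ S}, z u * M u x := by
        conv_lhs => rw [← hstatz]
        rfl
      calc w x = |∑ u : {x // x ∈ S}, z u * M u x| := by rw [← h1]
        _ ≤ ∑ u : {x // x ∈ S}, |z u * M u x| := Finset.abs_sum_le_sum_abs _ _
        _ = ∑ u : {x // x ∈ S}, w u * M u x := by
            refine Finset.sum_congr rfl fun u _ => ?_
            rw [abs_mul, abs_of_nonneg (hMnn u x)]
    have hsums : ∑ x : {x // x ∈ S}, (∑ u : {x // x ∈ S}, w u * M u x)
        = ∑ u : {x // x ∈ S}, w u := by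
      rw [Finset.sum_comm]
      refine Finset.sum_congr rfl fun u _ => ?_
      rw [← Finset.mul_sum, hrow u, mul_one]
    have hstat : ∀ x, ∑ u : {x // x ∈ S}, w u * M u x = w x := by
      have heq := (Finset.sum_eq_sum_iff_of_le (fun x (_ : x ∈ Finset.univ) => hle x)).mp
        (by rw [hsums])
      intro x
      exact (heq x (Finset.mem_univ x)).symm
    -- extend to V
    let w' : V → ℚ := fun x => if h : x ∈ S then w ⟨x, h⟩ else 0
    have hw'nn : ∀ x, 0 ≤ w' x := by
      intro x
      by_cases h : x ∈ S
      · simp only [w', dif_pos h]; exact hwnn _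
      · simp only [w', dif_neg h, le_refl]
    have hstat' : ∀ v, ∀ hv : v ∈ S,
        ∑ u ∈ S.filter (fun u => D u v),
          w' u * (((S.filter (fun w => D u w)).card : ℚ))⁻¹ = w' v := by
      intro v hv
      have h2eq : ∀ u : {x // x ∈ S}, w u * M u ⟨v, hv⟩ =
          (if D u.1 v then w' u.1 * (((S.filter (fun w => D u.1 w)).card : ℚ))⁻¹ else 0) := by
        intro u
        by_cases h : D u.1 v
        · simp only [M, w', if_pos h, dif_pos u.2]
        · simp only [M, w', if_neg h, mul_zero]
      calc ∑ u ∈ S.filter (fun u => D u v),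
            w' u * (((S.filter (fun w => D u w)).card : ℚ))⁻¹
          = ∑ u ∈ S, (if D u v then
              w' u * (((S.filter (fun w => D u w)).card : ℚ))⁻¹ else 0) := Finset.sum_filter _ _
        _ = ∑ u : {x // x ∈ S}, (if D u.1 v then
              w' u.1 * (((S.filter (fun w => D u.1 w)).card : ℚ))⁻¹ else 0) :=
            (Finset.sum_coe_sort S _).symm
        _ = ∑ u : {x // x ∈ S}, w u * M u ⟨v, hv⟩ :=
            Finset.sum_congr rfl fun u _ => (h2eq u).symm
        _ = w ⟨v, hv⟩ := hstat ⟨v, hv⟩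
        _ = w' v := by simp only [w', dif_pos hv]
    obtain ⟨t0, ht0⟩ : ∃ t, z t ≠ 0 := Function.ne_iff.mp hz0
    have hw't0 : 0 < w' t0.1 := by
      simp only [w', dif_pos t0.2]
      exact abs_pos.mpr ht0
    have hprop : ∀ a b : V, Relation.ReflTransGen D a b → Relation.ReflTransGen D b v0 →
        0 < w' a → 0 < w' b := by
      intro a b h
      induction h with
      | refl => exact fun _ ha => ha
      | @tail m b hpath harc ih =>
        intro hbv0 ha
        have hmv0 : Relation.ReflTransGen D m v0 :=
          (Relation.ReflTransGen.single harc).trans hbv0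
        have hm : 0 < w' m := ih hmv0 ha
        have hmS : m ∈ S := by
          by_contra hns
          simp only [w', dif_neg hns] at hm
          exact lt_irrefl 0 hm
        have hbS : b ∈ S := hstep m hmS b harc hbv0
        rw [← hstat' b hbS]
        apply Finset.sum_pos'
        · intro u hu
          refine mul_nonneg (hw'nn u) (by positivity)
        · refine ⟨m, Finset.mem_filter.mpr ⟨hmS, harc⟩, ?_⟩
          apply mul_pos hm
          rw [inv_pos]
          exact_mod_cast hdS m hmS
    have hpos : ∀ x ∈ S, 0 < w' x := by
      intro x hx
      exact hprop t0.1 x ((hmem t0.1 t0.2).1.trans (hmem x hx).2) (hmem x hx).1 hw't0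
    refine ⟨fun x => w' x / ((S.filter (fun w => D x w)).card : ℚ), ?_, ?_⟩
    · intro v hv
      apply div_pos (hpos v hv)
      exact_mod_cast hdS v hv
    · intro v hv
      have hsum : ∑ u ∈ S.filter (fun u => D u v),
          w' u / ((S.filter (fun w => D u w)).card : ℚ) = w' v := by
        rw [← hstat' v hv]
        exact Finset.sum_congr rfl fun u _ => div_eq_mul_inv _ _
      rw [hsum]
      have hrw : ((S.filter (fun w => D v w)).card : ℚ)
          * (w' v / ((S.filter (fun w => D v w)).card : ℚ)) = w' v := by
        field_simp
        exact mul_div_cancel_left₀ (w' v) (hdSne v hv)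
      rw [hrw]
  · -- S = {v0}
    push_neg at h2
    refine ⟨fun _ => 1, fun v _ => one_pos, fun v hv => ?_⟩
    have : S.filter (fun u => D u v) = ∅ := by
      apply Finset.filter_eq_empty_iff.mpr
      intro u hu
      have huv0 : u = v0 := h2 u hu
      have hvv0 : v = v0 := h2 v hv
      rw [huv0, hvv0]
      exact hirr v0
    rw [this]
    simp

end Weights

section Main

variable {V : Type*} [Fintype V] [DecidableEq V]

lemma aux_colouring (k : ℕ) (hk : 1 ≤ k) (D : V → V → Prop) [DecidableRel D]
    (hirr : ∀ v, ¬ D v v) (L : V → Finset ℕ) (hL : ∀ v, (L v).card = 2 * k) :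
    ∀ A : Finset V, (∀ v ∈ A, ∀ u, D v u → u ∈ A) →
      ∃ c : V → ℕ, (∀ v ∈ A, c v ∈ L v) ∧ ∀ v ∈ A,
        k * (Finset.univ.filter (fun u => D v u ∧ c u = c v)).card ≤
          (Finset.univ.filter (fun u => D v u)).card := by
  intro A
  induction A using Finset.strongInduction with
  | _ A ih =>
  intro hA
  classical
  rcases A.eq_empty_or_nonempty with rfl | hAne
  · exact ⟨fun _ => 0, by simp, by simp⟩
  obtain ⟨v0, hv0A, hmax⟩ := A.exists_max_image
      (fun x => (Finset.univ.filter (fun u => Relation.ReflTransGen D x u)).card) hAne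
  set S := A.filter (fun u => Relation.ReflTransGen D u v0 ∧ Relation.ReflTransGen D v0 u)
    with hSdef
  have hv0S : v0 ∈ S := Finset.mem_filter.mpr
    ⟨hv0A, Relation.ReflTransGen.refl, Relation.ReflTransGen.refl⟩
  have hSA : S ⊆ A := Finset.filter_subset _ _
  have hmemS : ∀ u ∈ S, Relation.ReflTransGen D u v0 ∧ Relation.ReflTransGen D v0 u :=
    fun u hu => (Finset.mem_filter.mp hu).2
  have hF1 : ∀ u ∈ A, ∀ s ∈ S, D u s → u ∈ S := by
    intro u hu s hs harc
    obtain ⟨hs1, _⟩ := hmemS s hs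
    have hu1 : Relation.ReflTransGen D u v0 := (Relation.ReflTransGen.single harc).trans hs1
    have hu2 : Relation.ReflTransGen D v0 u := by
      by_contra hnot
      have hss : Finset.univ.filter (fun x => Relation.ReflTransGen D v0 x) ⊂
          Finset.univ.filter (fun x => Relation.ReflTransGen D u x) := by
        refine ⟨?_, fun hsup => hnot ?_⟩
        · intro x hx
          simp only [Finset.mem_filter, Finset.mem_univ, true_and] at hx ⊢
          exact hu1.trans hx
        · have := hsup (Finset.mem_filter.mpr ⟨Finset.mem_univ u, Relation.ReflTransGen.refl⟩)
          exact (Finset.mem_filter.mp this).2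
      exact absurd (hmax u hu) (not_le.mpr (Finset.card_lt_card hss))
    exact Finset.mem_filter.mpr ⟨hu, hu1, hu2⟩
  have hstep : ∀ a ∈ S, ∀ x, D a x → Relation.ReflTransGen D x v0 → x ∈ S := by
    intro a ha x harc hxv0
    have hxA : x ∈ A := hA a (hSA ha) x harc
    exact Finset.mem_filter.mpr ⟨hxA, hxv0, (hmemS a ha).2.tail harc⟩
  have hA'ss : A \ S ⊂ A := Finset.sdiff_ssubset hSA ⟨v0, hv0S⟩
  have hA'cl : ∀ v ∈ A \ S, ∀ u, D v u → u ∈ A \ S := by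
    intro v hv u harc
    rw [Finset.mem_sdiff] at hv
    exact Finset.mem_sdiff.mpr ⟨hA v hv.1 u harc, fun huS => hv.2 (hF1 v hv.1 u huS harc)⟩
  obtain ⟨c', hc'L, hc'val⟩ := ih (A \ S) hA'ss hA'cl
  obtain ⟨y, hypos, hykey⟩ := exists_scc_weights D hirr S v0 hv0S hmemS hstep
  have hynn : ∀ u ∈ S, 0 ≤ y u := fun u hu => (hypos u hu).le
  have hLne : ∀ v, (L v).Nonempty := by
    intro v
    rw [← Finset.card_pos, hL v]
    omega
  set T : V → Finset ℕ := fun v => if v ∈ S then L v else {c' v} with hTdef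
  have hTne : ∀ v, (T v).Nonempty := by
    intro v
    by_cases h : v ∈ S
    · simpa [T, h] using hLne v
    · simp [T, h]
  have hCne : (Fintype.piFinset T).Nonempty := by
    refine ⟨fun v => (hTne v).choose, ?_⟩
    rw [Fintype.mem_piFinset]
    exact fun v => (hTne v).choose_spec
  set Φ : (V → ℕ) → ℚ := fun c => ∑ u ∈ S, y u *
      ((Finset.univ.filter (fun w => D u w ∧ c w = c u)).card : ℚ) with hΦdef
  obtain ⟨cmin, hcminC, hmin⟩ := Finset.exists_min_image (Fintype.piFinset T) Φ hCne
  have hcmem : ∀ v, cmin v ∈ T v := Fintype.mem_piFinset.mp hcminC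
  have hfix : ∀ v, v ∉ S → cmin v = c' v := by
    intro v hv
    have h := hcmem v
    simp only [T, if_neg hv, Finset.mem_singleton] at h
    exact h
  have hLmem : ∀ v ∈ S, cmin v ∈ L v := by
    intro v hv
    have h := hcmem v
    simpa [T, hv] using h
  refine ⟨cmin, ?_, ?_⟩
  · intro v hvA
    by_cases hvS : v ∈ S
    · exact hLmem v hvS
    · rw [hfix v hvS]
      exact hc'L v (Finset.mem_sdiff.mpr ⟨hvA, hvS⟩)
  intro v hvA
  by_cases hvS : v ∈ S
  swap
  · have hsame : Finset.univ.filter (fun u => D v u ∧ cmin u = cmin v)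
        = Finset.univ.filter (fun u => D v u ∧ c' u = c' v) := by
      apply Finset.filter_congr
      intro u _
      by_cases harc : D v u
      · have huS : u ∉ S := fun huS => hvS (hF1 v hvA u huS harc)
        rw [hfix u huS, hfix v hvS]
      · simp [harc]
    rw [hsame]
    exact hc'val v (Finset.mem_sdiff.mpr ⟨hvA, hvS⟩)
  -- the core case : v ∈ S
  set β := cmin v with hβ
  set outN : ℕ → ℕ :=
    fun γ => (Finset.univ.filter (fun w => D v w ∧ cmin w = γ)).card with houtN
  set InN : ℕ → ℚ :=
    fun γ => ∑ u ∈ S.filter (fun u => D u v ∧ cmin u = γ), y u with hInN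
  set G : ℕ → ℚ := fun γ => y v * (outN γ : ℚ) + InN γ with hG
  set REST : ℚ := ∑ u ∈ S.erase v, y u *
      ((Finset.univ.filter (fun w => w ≠ v ∧ D u w ∧ cmin w = cmin u)).card : ℚ) with hREST
  have hInNnn : ∀ γ, 0 ≤ InN γ := by
    intro γ
    rw [hInN]
    exact Finset.sum_nonneg fun u hu => hynn u (Finset.mem_filter.mp hu).1
  have hdecomp : ∀ γ : ℕ, Φ (Function.update cmin v γ) = REST + G γ := by
    intro γ
    have hterm_v : Finset.univ.filter (fun w => D v w ∧
          Function.update cmin v γ w = Function.update cmin v γ v)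
        = Finset.univ.filter (fun w => D v w ∧ cmin w = γ) := by
      apply Finset.filter_congr
      intro w _
      by_cases harc : D v w
      · have hwv : w ≠ v := fun h => hirr v (h ▸ harc)
        rw [Function.update_of_ne hwv, Function.update_self]
      · simp [harc]
    have hterm_u : ∀ u ∈ S.erase v,
        ((Finset.univ.filter (fun w => D u w ∧
            Function.update cmin v γ w = Function.update cmin v γ u)).card : ℚ)
        = ((Finset.univ.filter (fun w => w ≠ v ∧ D u w ∧ cmin w = cmin u)).card : ℚ)
          + (if D u v ∧ γ = cmin u then 1 else 0) := by
      intro u hu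
      obtain ⟨huv, huS⟩ := Finset.mem_erase.mp hu
      have hset : Finset.univ.filter (fun w => D u w ∧
            Function.update cmin v γ w = Function.update cmin v γ u)
          = (Finset.univ.filter (fun w => w ≠ v ∧ D u w ∧ cmin w = cmin u))
            ∪ (if D u v ∧ γ = cmin u then {v} else ∅) := by
        ext w
        simp only [Finset.mem_filter, Finset.mem_univ, true_and, Finset.mem_union,
          Function.update_of_ne huv]
        by_cases hwv : w = v
        · subst hwv
          rw [Function.update_self]
          by_cases hcond : D u w ∧ γ = cmin u
          · simp [hcond, if_pos hcond]
          · simp only [if_neg hcond, Finset.notMem_empty, or_false]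
            constructor
            · intro hx
              exact absurd ⟨hx.1, hx.2⟩ hcond
            · rintro ⟨hne, -⟩
              exact absurd rfl hne
        · rw [Function.update_of_ne hwv]
          have hnotv : w ∉ (if D u v ∧ γ = cmin u then ({v} : Finset V) else ∅) := by
            split
            · simpa using hwv
            · simp
          simp only [hnotv, or_false]
          tauto
      have hdisj : Disjoint (Finset.univ.filter (fun w => w ≠ v ∧ D u w ∧ cmin w = cmin u))
          (if D u v ∧ γ = cmin u then ({v} : Finset V) else ∅) := by
        split
        · rw [Finset.disjoint_singleton_right]
          simp
        · exact Finset.disjoint_empty_right _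
      rw [hset, Finset.card_union_of_disjoint hdisj]
      push_cast
      congr 1
      split
      · simp
      · simp
    calc Φ (Function.update cmin v γ)
        = y v * ((Finset.univ.filter (fun w => D v w ∧
              Function.update cmin v γ w = Function.update cmin v γ v)).card : ℚ)
          + ∑ u ∈ S.erase v, y u * ((Finset.univ.filter (fun w => D u w ∧
              Function.update cmin v γ w = Function.update cmin v γ u)).card : ℚ) := by
          rw [hΦdef]
          exact (Finset.add_sum_erase S _ hvS).symm
      _ = y v * (outN γ : ℚ)
          + ∑ u ∈ S.erase v, (y u * ((Finset.univ.filter (fun w => w ≠ v ∧ D u w ∧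
                cmin w = cmin u)).card : ℚ)
              + y u * (if D u v ∧ γ = cmin u then 1 else 0)) := by
          rw [hterm_v]
          congr 1
          refine Finset.sum_congr rfl fun u hu => ?_
          rw [hterm_u u hu, mul_add]
      _ = y v * (outN γ : ℚ) + (REST + ∑ u ∈ S.erase v,
            y u * (if D u v ∧ γ = cmin u then 1 else 0)) := by
          rw [Finset.sum_add_distrib, hREST]
      _ = REST + G γ := by
          have hInNeq : ∑ u ∈ S.erase v, y u * (if D u v ∧ γ = cmin u then 1 else 0)
              = InN γ := by
            have h1 : ∀ u ∈ S.erase v, y u * (if D u v ∧ γ = cmin u then 1 else 0)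
                = if D u v ∧ cmin u = γ then y u else 0 := by
              intro u _
              by_cases hcond : D u v ∧ γ = cmin u
              · rw [if_pos hcond, if_pos ⟨hcond.1, hcond.2.symm⟩, mul_one]
              · rw [if_neg hcond, if_neg, mul_zero]
                intro hc
                exact hcond ⟨hc.1, hc.2.symm⟩
            rw [Finset.sum_congr rfl h1, ← Finset.sum_filter, hInN]
            apply Finset.sum_congr ?_ (fun _ _ => rfl)
            ext u
            simp only [Finset.mem_filter, Finset.mem_erase]
            constructor
            · rintro ⟨⟨_, huS⟩, h⟩
              exact ⟨huS, h⟩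
            · rintro ⟨huS, h⟩
              exact ⟨⟨fun he => (hirr v) (he ▸ h.1), huS⟩, h⟩
          rw [hInNeq, hG]
          ring
  have hGmono : ∀ α ∈ L v, G β ≤ G α := by
    intro α hα
    have hupd : Function.update cmin v α ∈ Fintype.piFinset T := by
      rw [Fintype.mem_piFinset]
      intro a
      by_cases ha : a = v
      · subst ha
        rw [Function.update_self]
        simp [T, hvS, hα]
      · rw [Function.update_of_ne ha]
        exact hcmem a
    have h1 : Φ cmin ≤ Φ (Function.update cmin v α) := hmin _ hupd
    have h2 : Φ cmin = REST + G β := by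
      rw [← hdecomp β, hβ, Function.update_eq_self]
    rw [h2, hdecomp α] at h1
    exact le_of_add_le_add_left h1
  have hout_sum : ∑ α ∈ L v, outN α ≤ (Finset.univ.filter (fun u => D v u)).card := by
    have hdisj : ∀ α ∈ L v, ∀ α' ∈ L v, α ≠ α' → Disjoint
        (Finset.univ.filter (fun w => D v w ∧ cmin w = α))
        (Finset.univ.filter (fun w => D v w ∧ cmin w = α')) := by
      intro α _ α' _ hne
      rw [Finset.disjoint_left]
      intro a ha ha'
      rw [Finset.mem_filter] at ha ha'
      exact hne (ha.2.2 ▸ ha'.2.2 ▸ rfl)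
    calc ∑ α ∈ L v, outN α
        = ((L v).biUnion (fun α => Finset.univ.filter (fun w => D v w ∧ cmin w = α))).card :=
          (Finset.card_biUnion hdisj).symm
      _ ≤ (Finset.univ.filter (fun u => D v u)).card := by
          apply Finset.card_le_card
          intro x hx
          obtain ⟨α, _, hx⟩ := Finset.mem_biUnion.mp hx
          rw [Finset.mem_filter] at hx ⊢
          exact ⟨hx.1, hx.2.1⟩
  have hIn_sum : ∑ α ∈ L v, InN α ≤ ∑ u ∈ S.filter (fun u => D u v), y u := by
    have hdisj : (↑(L v) : Set ℕ).PairwiseDisjoint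
        (fun α => S.filter (fun u => D u v ∧ cmin u = α)) := by
      intro α _ α' _ hne
      rw [Function.onFun, Finset.disjoint_left]
      intro a ha ha'
      rw [Finset.mem_filter] at ha ha'
      exact hne (ha.2.2 ▸ ha'.2.2 ▸ rfl)
    calc ∑ α ∈ L v, InN α
        = ∑ u ∈ (L v).biUnion (fun α => S.filter (fun u => D u v ∧ cmin u = α)), y u :=
          (Finset.sum_biUnion hdisj).symm
      _ ≤ ∑ u ∈ S.filter (fun u => D u v), y u := by
          apply Finset.sum_le_sum_of_subset_of_nonneg
          · intro x hx
            obtain ⟨α, _, hx⟩ := Finset.mem_biUnion.mp hx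
            rw [Finset.mem_filter] at hx ⊢
            exact ⟨hx.1, hx.2.1⟩
          · intro u hu _
            exact hynn u (Finset.mem_filter.mp hu).1
  have hkey : ∑ u ∈ S.filter (fun u => D u v), y u
      ≤ ((Finset.univ.filter (fun u => D v u)).card : ℚ) * y v := by
    refine (hykey v hvS).trans ?_
    apply mul_le_mul_of_nonneg_right ?_ (hynn v hvS)
    have : (S.filter (fun w => D v w)).card ≤ (Finset.univ.filter (fun u => D v u)).card := by
      apply Finset.card_le_card
      intro u hu
      exact Finset.mem_filter.mpr ⟨Finset.mem_univ u, (Finset.mem_filter.mp hu).2⟩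
    exact_mod_cast this
  have hsumG : (2 * k : ℚ) * G β
      ≤ 2 * ((Finset.univ.filter (fun u => D v u)).card : ℚ) * y v := by
    have h1 : (L v).card • G β ≤ ∑ α ∈ L v, G α := by
      rw [← Finset.sum_const]
      exact Finset.sum_le_sum fun α hα => hGmono α hα
    rw [hL v, nsmul_eq_mul] at h1
    push_cast at h1
    have h2 : ∑ α ∈ L v, G α = y v * (∑ α ∈ L v, (outN α : ℚ)) + ∑ α ∈ L v, InN α := by
      rw [hG, Finset.sum_add_distrib, Finset.mul_sum]
    have h3 : y v * (∑ α ∈ L v, (outN α : ℚ))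
        ≤ y v * ((Finset.univ.filter (fun u => D v u)).card : ℚ) := by
      apply mul_le_mul_of_nonneg_left ?_ (hynn v hvS)
      exact_mod_cast hout_sum
    have h4 := hIn_sum.trans hkey
    calc (2 * k : ℚ) * G β ≤ ∑ α ∈ L v, G α := h1
      _ = y v * (∑ α ∈ L v, (outN α : ℚ)) + ∑ α ∈ L v, InN α := h2
      _ ≤ y v * ((Finset.univ.filter (fun u => D v u)).card : ℚ)
          + ((Finset.univ.filter (fun u => D v u)).card : ℚ) * y v := add_le_add h3 h4
      _ = 2 * ((Finset.univ.filter (fun u => D v u)).card : ℚ) * y v := by ring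
  have houtβ : (k : ℚ) * (outN β : ℚ) ≤ ((Finset.univ.filter (fun u => D v u)).card : ℚ) := by
    have hyv := hypos v hvS
    have hGβ : y v * (outN β : ℚ) ≤ G β := by
      rw [hG]
      exact le_add_of_nonneg_right (hInNnn β)
    have hfin : (k : ℚ) * (outN β : ℚ) * (2 * y v)
        ≤ ((Finset.univ.filter (fun u => D v u)).card : ℚ) * (2 * y v) := by
      have h5 : (2 * k : ℚ) * (y v * (outN β : ℚ)) ≤ (2 * k : ℚ) * G β := by
        apply mul_le_mul_of_nonneg_left hGβ
        positivity
      have h6 := h5.trans hsumG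
      nlinarith [h6]
    exact le_of_mul_le_mul_right hfin (by positivity)
  exact_mod_cast houtβ

end Main

/-- Every digraph is 1/k-majority 2k-choosable for all k ≥ 2. -/
theorem majority_choosability_two_k
    {V : Type*} [Fintype V] [DecidableEq V] (k : ℕ) (hk : 2 ≤ k)
    (D : V → V → Prop) [DecidableRel D] (hirr : ∀ v, ¬ D v v)
    (L : V → Finset ℕ) (hL : ∀ v, (L v).card = 2 * k) :
    ∃ c : V → ℕ, (∀ v, c v ∈ L v) ∧ ∀ v : V,
      k * (Finset.univ.filter (fun u => D v u ∧ c u = c v)).card ≤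
        (Finset.univ.filter (fun u => D v u)).card := by
  obtain ⟨c, h1, h2⟩ := aux_colouring k (by omega) D hirr L hL Finset.univ
    (fun _ _ u _ => Finset.mem_univ u)
  exact ⟨c, fun v => h1 v (Finset.mem_univ v), fun v => h2 v (Finset.mem_univ v)⟩
end

section
/- Given a digraph with a list of 3 colours assigned to each vertex, there is a colouring of the vertices from these lists such that each vertex has the same colour as at most two thirds of its out-neighbours. -/
set_option linter.unusedSectionVars false
set_option maxHeartbeats 1000000
open Matrix
section ABG
variable {V : Type*} [Fintype V] [DecidableEq V]

private lemma abg_sum_matches_le (D : V → V → Prop) [DecidableRel D]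
    (A : Finset V) (v : V) (c : V → ℕ) (Lv : Finset ℕ) :
    ∑ a ∈ Lv, (A.filter fun u => D v u ∧ c u = a).card ≤ (A.filter fun u => D v u).card := by
  simp only [Finset.card_filter]
  rw [Finset.sum_comm]
  apply Finset.sum_le_sum
  intro u _
  by_cases hD : D v u
  · simp only [hD, true_and]
    rw [Finset.sum_ite_eq Lv (c u) (fun _ => 1)]
    split <;> norm_num
  · simp [hD]

private lemma abg_card_filter_split (S : Finset V) (v : V) (hv : v ∈ S)
    (p : V → Prop) [DecidablePred p] :
    (S.filter p).card = ((S.erase v).filter p).card + (if p v then 1 else 0) := by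
  conv_lhs => rw [← Finset.insert_erase hv]
  rw [Finset.filter_insert]
  by_cases hp : p v
  · rw [if_pos hp, if_pos hp,
      Finset.card_insert_of_notMem
        (fun h => (Finset.mem_erase.mp (Finset.mem_filter.mp h).1).1 rfl)]
  · rw [if_neg hp, if_neg hp, add_zero]

private lemma abg_exists_eigen (D : V → V → Prop) [DecidableRel D]
    (S : Finset V) (hS : S.Nonempty)
    (hcl : ∀ T ⊆ S, (∀ v ∈ T, ∀ u ∈ S, D v u → u ∈ T) → T.Nonempty → T = S) :
    ∃ w : V → ℚ, (∀ x, 0 ≤ w x) ∧ (∀ v ∈ S, 0 < w v) ∧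
      ∀ v ∈ S, (∑ u ∈ S.filter (fun u => D u v), w u)
        = ((S.filter (fun u => D v u)).card : ℚ) * w v := by
  classical
  haveI : Nonempty {x // x ∈ S} := ⟨⟨hS.choose, hS.choose_spec⟩⟩
  set d : V → ℕ := fun x => (S.filter (fun u => D x u)).card with hd
  have hsum_ind : ∀ (p : V → Prop) (hp : DecidablePred p),
      (∑ x ∈ S, if p x then (1:ℚ) else 0) = ((S.filter p).card : ℚ) := by
    intro p hp
    rw [Finset.card_filter]
    push_cast
    apply Finset.sum_congr rfl
    intro x _
    split <;> simp
  set M : Matrix {x // x ∈ S} {x // x ∈ S} ℚ :=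
    fun v u => (if D (u:V) (v:V) then 1 else 0) - (if u = v then (d (u:V) : ℚ) else 0) with hM
  have hones : (fun _ => (1:ℚ)) ᵥ* M = 0 := by
    funext u
    simp only [Matrix.vecMul, dotProduct, hM, one_mul, Pi.zero_apply]
    rw [Finset.sum_sub_distrib]
    have h1 : (∑ v : {x // x ∈ S}, if D (u:V) (v:V) then (1:ℚ) else 0)
        = ((S.filter (fun x => D (u:V) x)).card : ℚ) := by
      rw [← hsum_ind (fun x => D (u:V) x) inferInstance]
      exact Finset.sum_coe_sort S (fun x => if D (u:V) x then (1:ℚ) else 0)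
    have h2 : (∑ v : {x // x ∈ S}, if u = v then (d (u:V) : ℚ) else 0)
        = (d (u:V) : ℚ) := by
      rw [Finset.sum_ite_eq Finset.univ u (fun _ => (d (u:V) : ℚ))]
      simp
    rw [h1, h2, hd]
    simp
  have hdet : M.det = 0 := by
    rw [← Matrix.exists_vecMul_eq_zero_iff]
    refine ⟨fun _ => (1:ℚ), ?_, hones⟩
    intro h
    have := congr_fun h (Classical.arbitrary _)
    norm_num at this
  obtain ⟨t, htne, htM⟩ := Matrix.exists_mulVec_eq_zero_iff.mpr hdet
  have hrow : ∀ v : {x // x ∈ S},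
      (∑ u : {x // x ∈ S}, if D (u:V) (v:V) then t u else 0) = (d (v:V) : ℚ) * t v := by
    intro v
    have h0 := congr_fun htM v
    simp only [Matrix.mulVec, dotProduct, hM, Pi.zero_apply, sub_mul, ite_mul, one_mul,
      zero_mul] at h0
    rw [Finset.sum_sub_distrib] at h0
    have h2 : (∑ u : {x // x ∈ S}, if u = v then (d (u:V) : ℚ) * t u else 0)
        = (d (v:V) : ℚ) * t v := by
      rw [Finset.sum_ite_eq' Finset.univ v (fun u => (d (u:V) : ℚ) * t u)]
      simp
    rw [h2] at h0
    linarith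
  set w : V → ℚ := fun x => if h : x ∈ S then |t ⟨x, h⟩| else 0 with hw
  have hwcoe : ∀ u : {x // x ∈ S}, w (u:V) = |t u| := by
    intro u
    rw [hw]
    simp [u.2]
  have hwnn : ∀ x, 0 ≤ w x := by
    intro x
    rw [hw]
    dsimp only
    split
    · exact abs_nonneg _
    · exact le_rfl
  have hge : ∀ v ∈ S, (d v : ℚ) * w v ≤ ∑ u ∈ S.filter (fun u => D u v), w u := by
    intro v hv
    have h1 : (d v : ℚ) * w v = |(d v : ℚ) * t ⟨v, hv⟩| := by
      rw [abs_mul, abs_of_nonneg (by positivity : (0:ℚ) ≤ (d v:ℚ))]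
      rw [hwcoe ⟨v, hv⟩]
    rw [h1, ← hrow ⟨v, hv⟩]
    calc |∑ u : {x // x ∈ S}, if D (u:V) v then t u else 0|
        ≤ ∑ u : {x // x ∈ S}, |if D (u:V) v then t u else 0| :=
          Finset.abs_sum_le_sum_abs _ _
      _ = ∑ u : {x // x ∈ S}, if D (u:V) v then w (u:V) else 0 := by
          apply Finset.sum_congr rfl
          intro u _
          rw [apply_ite abs, abs_zero, hwcoe]
      _ = ∑ u ∈ S, if D u v then w u else 0 :=
          Finset.sum_coe_sort S (fun u => if D u v then w u else 0)
      _ = ∑ u ∈ S.filter (fun u => D u v), w u := (Finset.sum_filter _ _).symm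
  have htot : ∑ v ∈ S, ((d v : ℚ) * w v) = ∑ v ∈ S, (∑ u ∈ S.filter (fun u => D u v), w u) := by
    have hre : ∀ v ∈ S, (∑ u ∈ S.filter (fun u => D u v), w u)
        = ∑ u ∈ S, if D u v then w u else 0 := fun v _ => Finset.sum_filter _ _
    rw [Finset.sum_congr rfl hre, Finset.sum_comm]
    apply Finset.sum_congr rfl
    intro u _
    rw [← Finset.sum_filter, Finset.sum_const, nsmul_eq_mul, hd]
  have heig : ∀ v ∈ S, (∑ u ∈ S.filter (fun u => D u v), w u) = (d v : ℚ) * w v := by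
    intro v hv
    exact ((Finset.sum_eq_sum_iff_of_le hge).mp htot v hv).symm
  have hwpos : ∀ v ∈ S, 0 < w v := by
    set U : Finset V := S.filter (fun x => 0 < w x) with hU
    have hUne : U.Nonempty := by
      have hex : ∃ u : {x // x ∈ S}, t u ≠ 0 := by
        by_contra h
        push_neg at h
        exact htne (funext fun u => h u)
      obtain ⟨u, hu⟩ := hex
      exact ⟨(u:V), Finset.mem_filter.mpr ⟨u.2, by rw [hwcoe]; exact abs_pos.mpr hu⟩⟩
    have hUcl : ∀ p ∈ U, ∀ q ∈ S, D p q → q ∈ U := by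
      intro p hp q hq hpq
      obtain ⟨hpS, hpw⟩ := Finset.mem_filter.mp hp
      have h1 : w p ≤ ∑ u ∈ S.filter (fun u => D u q), w u :=
        Finset.single_le_sum (fun i _ => hwnn i) (Finset.mem_filter.mpr ⟨hpS, hpq⟩)
      rw [heig q hq] at h1
      have h2 : 0 < (d q : ℚ) * w q := lt_of_lt_of_le hpw h1
      refine Finset.mem_filter.mpr ⟨hq, ?_⟩
      by_contra hneg
      push_neg at hneg
      nlinarith [(by positivity : (0:ℚ) ≤ (d q : ℚ))]
    have hUeq := hcl U (Finset.filter_subset _ _) hUcl hUne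
    intro v hv
    have : v ∈ U := hUeq ▸ hv
    exact (Finset.mem_filter.mp this).2
  refine ⟨w, hwnn, hwpos, ?_⟩
  intro v hv
  rw [heig v hv, hd]

private lemma abg_gen (D : V → V → Prop) [DecidableRel D] (hirr : ∀ v, ¬ D v v)
    (L : V → Finset ℕ) (hL : ∀ v, (L v).card = 3) (S : Finset V) :
    ∀ (e : V → ℕ → ℕ) (E : V → ℕ),
      (∀ v ∈ S, ∑ a ∈ L v, e v a ≤ E v) →
      ∃ c : V → ℕ, (∀ v, c v ∈ L v) ∧ ∀ v ∈ S,
        3 * ((S.filter (fun u => D v u ∧ c u = c v)).card + e v (c v)) ≤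
          2 * ((S.filter (fun u => D v u)).card + E v) := by
  classical
  have hLne : ∀ v, (L v).Nonempty := fun v => Finset.card_pos.mp (by rw [hL v]; norm_num)
  induction S using Finset.strongInduction with
  | _ S ih =>
  intro e E he
  rcases S.eq_empty_or_nonempty with rfl | hS
  · exact ⟨fun v => (hLne v).choose, fun v => (hLne v).choose_spec, by simp⟩
  by_cases hT : ∃ T ⊆ S, T.Nonempty ∧ T ≠ S ∧ ∀ v ∈ T, ∀ u ∈ S, D v u → u ∈ T
  · obtain ⟨T, hTS, hTne, hTneS, hTcl⟩ := hT
    obtain ⟨c₁, hc₁L, hc₁⟩ := ih T (hTS.ssubset_of_ne hTneS) e E (fun v hv => he v (hTS hv))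
    obtain ⟨c₂, hc₂L, hc₂⟩ := ih (S \ T) (Finset.sdiff_ssubset hTS hTne)
      (fun v a => e v a + (T.filter fun u => D v u ∧ c₁ u = a).card)
      (fun v => E v + (T.filter fun u => D v u).card)
      (by
        intro v hv
        rw [Finset.sum_add_distrib]
        exact add_le_add (he v (Finset.mem_sdiff.mp hv).1)
          (abg_sum_matches_le D T v c₁ (L v)))
    refine ⟨fun v => if v ∈ T then c₁ v else c₂ v, fun v => ?_, ?_⟩
    · dsimp only
      split
      · exact hc₁L v
      · exact hc₂L v
    intro v hv
    dsimp only
    by_cases hvT : v ∈ T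
    · have hfe : S.filter (fun u => D v u ∧
            (if u ∈ T then c₁ u else c₂ u) = (if v ∈ T then c₁ v else c₂ v))
          = T.filter (fun u => D v u ∧ c₁ u = c₁ v) := by
        ext u
        simp only [Finset.mem_filter, if_pos hvT]
        constructor
        · rintro ⟨huS, hD, hc⟩
          have huT := hTcl v hvT u huS hD
          exact ⟨huT, hD, by rwa [if_pos huT] at hc⟩
        · rintro ⟨huT, hD, hc⟩
          exact ⟨hTS huT, hD, by rwa [if_pos huT]⟩
      have hfd : S.filter (fun u => D v u) = T.filter (fun u => D v u) := by
        ext u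
        simp only [Finset.mem_filter]
        exact ⟨fun h => ⟨hTcl v hvT u h.1 h.2, h.2⟩, fun h => ⟨hTS h.1, h.2⟩⟩
      rw [hfe, hfd, if_pos hvT]
      exact hc₁ v hvT
    · have hvS' : v ∈ S \ T := Finset.mem_sdiff.mpr ⟨hv, hvT⟩
      have hsplit : ∀ (p : V → Prop) (hp : DecidablePred p),
          (S.filter p).card = ((S \ T).filter p).card + (T.filter p).card := by
        intro p hp
        conv_lhs => rw [← Finset.sdiff_union_of_subset hTS]
        rw [Finset.filter_union,
          Finset.card_union_of_disjoint (Finset.disjoint_filter_filter Finset.sdiff_disjoint)]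
      specialize hc₂ v hvS'
      rw [hsplit _ inferInstance, hsplit (fun u => D v u) inferInstance]
      have h1 : (T.filter fun u => D v u ∧
            (if u ∈ T then c₁ u else c₂ u) = (if v ∈ T then c₁ v else c₂ v))
          = T.filter (fun u => D v u ∧ c₁ u = c₂ v) := by
        apply Finset.filter_congr
        intro u huT
        rw [if_pos huT, if_neg hvT]
      have h2 : ((S \ T).filter fun u => D v u ∧
            (if u ∈ T then c₁ u else c₂ u) = (if v ∈ T then c₁ v else c₂ v))
          = (S \ T).filter (fun u => D v u ∧ c₂ u = c₂ v) := by
        apply Finset.filter_congr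
        intro u hu
        rw [if_neg (Finset.mem_sdiff.mp hu).2, if_neg hvT]
      rw [h1, h2, if_neg hvT]
      omega
  · have hcl : ∀ T ⊆ S, (∀ v ∈ T, ∀ u ∈ S, D v u → u ∈ T) → T.Nonempty → T = S := by
      intro T hTS hTclosed hTne
      by_contra hne
      exact hT ⟨T, hTS, hTne, hne, hTclosed⟩
    obtain ⟨w, hwnn, hwpos, heig⟩ := abg_exists_eigen D S hS hcl
    classical
    haveI hne : ∀ v : V, Nonempty {a // a ∈ L v} :=
      fun v => ⟨⟨(hLne v).choose, (hLne v).choose_spec⟩⟩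
    set Φ : (∀ v : V, {a // a ∈ L v}) → ℚ := fun c => ∑ x ∈ S,
      w x * (((S.filter (fun u => D x u ∧ (c u : ℕ) = (c x : ℕ))).card : ℚ) + (e x (c x) : ℚ))
      with hΦ
    obtain ⟨c, -, hmin⟩ := Finset.exists_min_image Finset.univ Φ Finset.univ_nonempty
    refine ⟨fun v => (c v : ℕ), fun v => (c v).2, ?_⟩
    intro v hv
    show 3 * ((S.filter (fun u => D v u ∧ (c u : ℕ) = (c v : ℕ))).card + e v (c v : ℕ)) ≤
          2 * ((S.filter (fun u => D v u)).card + E v)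
    set dv : ℕ := (S.filter (fun u => D v u)).card with hdv
    set mm : ℕ → ℕ := fun b => (S.filter (fun u => D v u ∧ (c u : ℕ) = b)).card with hmm
    set ins : ℕ → ℚ := fun b => ∑ x ∈ S.erase v, (if D x v ∧ b = (c x : ℕ) then w x else 0)
      with hins
    set G : ℕ → ℚ := fun b => w v * ((mm b : ℚ) + (e v b : ℚ)) + ins b with hG
    set K : ℚ := ∑ x ∈ S.erase v,
      w x * ((((S.erase v).filter (fun u => D x u ∧ (c u : ℕ) = (c x : ℕ))).card : ℚ)
        + (e x (c x) : ℚ)) with hK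
    have hrep : ∀ cN : (∀ v : V, {a // a ∈ L v}),
        (∀ u ∈ S.erase v, (cN u : ℕ) = (c u : ℕ)) → Φ cN = K + G ((cN v : ℕ)) := by
      intro cN hcN
      rw [hΦ]
      dsimp only
      rw [← Finset.sum_erase_add S _ hv]
      have hvcard : (S.filter (fun u => D v u ∧ (cN u : ℕ) = (cN v : ℕ))).card = mm ((cN v : ℕ)) := by
        rw [hmm]
        dsimp only
        congr 1
        apply Finset.filter_congr
        intro u huS
        by_cases hDu : D v u
        · have hune : u ≠ v := fun h => hirr v (h ▸ hDu)
          rw [hcN u (Finset.mem_erase.mpr ⟨hune, huS⟩)]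
        · simp [hDu]
      have hxterm : ∀ x ∈ S.erase v,
          w x * (((S.filter (fun u => D x u ∧ (cN u : ℕ) = (cN x : ℕ))).card : ℚ) + (e x (cN x) : ℚ))
          = w x * ((((S.erase v).filter (fun u => D x u ∧ (c u : ℕ) = (c x : ℕ))).card : ℚ)
              + (e x (c x) : ℚ))
            + (if D x v ∧ ((cN v : ℕ)) = (c x : ℕ) then w x else 0) := by
        intro x hx
        have hcx : (cN x : ℕ) = (c x : ℕ) := hcN x hx
        have hsc : (S.filter (fun u => D x u ∧ (cN u : ℕ) = (cN x : ℕ))).card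
            = ((S.erase v).filter (fun u => D x u ∧ (c u : ℕ) = (c x : ℕ))).card
              + (if D x v ∧ ((cN v : ℕ)) = (c x : ℕ) then 1 else 0) := by
        -- split at v
          rw [abg_card_filter_split S v hv (fun u => D x u ∧ (cN u : ℕ) = (cN x : ℕ))]
          congr 1
          · congr 1
            apply Finset.filter_congr
            intro u hu
            rw [hcN u hu, hcx]
          · rw [hcx]
        rw [hsc, hcx]
        push_cast
        rw [mul_add, mul_add, mul_add, mul_ite, mul_one, mul_zero]
        ring
      rw [Finset.sum_congr rfl hxterm, Finset.sum_add_distrib, hvcard]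
      rw [hG]
      dsimp only
      rw [hins]
      dsimp only
      ring
    have hGmin : ∀ a ∈ L v, G ((c v : ℕ)) ≤ G a := by
      intro a ha
      have h1 := hrep c (fun u _ => rfl)
      have h2 := hrep (Function.update c v ⟨a, ha⟩) (fun u hu => by
        rw [Function.update_of_ne (Finset.mem_erase.mp hu).1])
      have h3 := hmin (Function.update c v ⟨a, ha⟩) (Finset.mem_univ _)
      rw [h1, h2] at h3
      simp only [Function.update_self] at h3
      linarith
    have hsum1 : ∑ a ∈ L v, (mm a : ℚ) ≤ (dv : ℚ) := by
      have h := abg_sum_matches_le D S v (fun u => (c u : ℕ)) (L v)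
      rw [hmm, hdv]
      dsimp only
      exact_mod_cast h
    have hsum2 : ∑ a ∈ L v, (e v a : ℚ) ≤ (E v : ℚ) := by exact_mod_cast he v hv
    have hsum3 : ∑ a ∈ L v, ins a ≤ (dv : ℚ) * w v := by
      rw [hins]
      dsimp only
      rw [Finset.sum_comm]
      calc ∑ x ∈ S.erase v, ∑ a ∈ L v, (if D x v ∧ a = (c x : ℕ) then w x else 0)
          ≤ ∑ x ∈ S.erase v, (if D x v then w x else 0) := by
            apply Finset.sum_le_sum
            intro x _
            by_cases hD : D x v
            · simp only [hD, true_and, if_true]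
              rw [Finset.sum_ite_eq' (L v) ((c x : ℕ)) (fun _ => w x)]
              split
              · exact le_rfl
              · exact hwnn x
            · simp [hD]
        _ ≤ ∑ x ∈ S, (if D x v then w x else 0) := by
            apply Finset.sum_le_sum_of_subset_of_nonneg (Finset.erase_subset v S)
            intro x _ _
            split
            · exact hwnn x
            · exact le_rfl
        _ = ∑ x ∈ S.filter (fun u => D u v), w x := (Finset.sum_filter _ _).symm
        _ = (dv : ℚ) * w v := heig v hv
    have h3G : 3 * G ((c v : ℕ)) ≤ w v * ((dv : ℚ) + (E v : ℚ)) + (dv : ℚ) * w v := by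
      have hle : ∑ a ∈ L v, G ((c v : ℕ)) ≤ ∑ a ∈ L v, G a := Finset.sum_le_sum hGmin
      rw [Finset.sum_const, hL v, nsmul_eq_mul] at hle
      have hsplit : ∑ a ∈ L v, G a
          = w v * ((∑ a ∈ L v, (mm a : ℚ)) + (∑ a ∈ L v, (e v a : ℚ))) + ∑ a ∈ L v, ins a := by
        rw [hG]
        dsimp only
        rw [Finset.sum_add_distrib, ← Finset.mul_sum, Finset.sum_add_distrib]
      have hwv : 0 ≤ w v := hwnn v
      have : ∑ a ∈ L v, G a ≤ w v * ((dv : ℚ) + (E v : ℚ)) + (dv : ℚ) * w v := by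
        rw [hsplit]
        have := mul_le_mul_of_nonneg_left (add_le_add hsum1 hsum2) hwv
        linarith
      push_cast at hle
      linarith
    have hml : w v * ((mm ((c v : ℕ)) : ℚ) + (e v ((c v : ℕ)) : ℚ)) ≤ G ((c v : ℕ)) := by
      rw [hG]
      dsimp only
      have : 0 ≤ ins ((c v : ℕ)) := by
        rw [hins]
        dsimp only
        apply Finset.sum_nonneg
        intro x _
        split
        · exact hwnn x
        · exact le_rfl
      linarith
    have hwv := hwpos v hv
    have hfin : 3 * ((mm ((c v : ℕ)) : ℚ) + (e v ((c v : ℕ)) : ℚ)) ≤ 2 * (dv : ℚ) + (E v : ℚ) := by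
      have h4 : w v * (3 * ((mm ((c v : ℕ)) : ℚ) + (e v ((c v : ℕ)) : ℚ)))
          ≤ w v * (2 * (dv : ℚ) + (E v : ℚ)) := by
        have e1 : w v * (3 * ((mm ((c v : ℕ)) : ℚ) + (e v ((c v : ℕ)) : ℚ)))
            = 3 * (w v * ((mm ((c v : ℕ)) : ℚ) + (e v ((c v : ℕ)) : ℚ))) := by ring
        have e2 : w v * (2 * (dv : ℚ) + (E v : ℚ))
            = w v * ((dv : ℚ) + (E v : ℚ)) + (dv : ℚ) * w v := by ring
        rw [e1, e2]
        calc 3 * (w v * ((mm ((c v : ℕ)) : ℚ) + (e v ((c v : ℕ)) : ℚ)))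
            ≤ 3 * G ((c v : ℕ)) := by linarith
          _ ≤ _ := h3G
      exact le_of_mul_le_mul_left h4 hwv
    have hEnn : (0:ℚ) ≤ (E v : ℚ) := by positivity
    have hq : (3:ℚ) * ((mm ((c v : ℕ)) : ℚ) + (e v ((c v : ℕ)) : ℚ))
        ≤ 2 * ((dv : ℚ) + (E v : ℚ)) := by linarith
    exact_mod_cast hq

end ABG

/-- Given a digraph with lists of 3 colours at each vertex, there is a colouring from
the lists such that each vertex has the same colour as at most two thirds of its
out-neighbours (Anholcer–Bosek–Grytczuk). -/
theorem majority_choosability_three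
    {V : Type*} [Fintype V] [DecidableEq V]
    (D : V → V → Prop) [DecidableRel D] (hirr : ∀ v, ¬ D v v)
    (L : V → Finset ℕ) (hL : ∀ v, (L v).card = 3) :
    ∃ c : V → ℕ, (∀ v, c v ∈ L v) ∧ ∀ v : V,
      3 * (Finset.univ.filter (fun u => D v u ∧ c u = c v)).card ≤
        2 * (Finset.univ.filter (fun u => D v u)).card := by
  classical
  obtain ⟨c, hcL, hc⟩ := abg_gen D hirr L hL Finset.univ (fun _ _ => 0) (fun _ => 0)
    (by simp)
  refine ⟨c, hcL, fun v => ?_⟩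
  have h := hc v (Finset.mem_univ v)
  simpa using h
end

section
/- Every finite digraph admits a 4-colouring of its vertices such that each vertex has the same colour as at most half of its out-neighbours. -/
open Finset

/-- Greedy half-colouring: for any rank function, there is a Bool colouring such
that each vertex has at most half of its higher-ranked out-neighbours of its colour. -/
lemma greedy_half {V : Type*} [Fintype V] [DecidableEq V]
    (R : V → V → Prop) [DecidableRel R] (r : V → ℕ) :
    ∃ a : V → Bool, ∀ v,
      2 * (univ.filter (fun u => r v < r u ∧ R v u ∧ a u = a v)).card ≤
        (univ.filter (fun u => r v < r u ∧ R v u)).card := by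
  classical
  set N := (univ.sup r) + 1 with hN
  have hub : ∀ v : V, r v < N := fun v => by
    have := Finset.le_sup (f := r) (mem_univ v); omega
  have key : ∀ j, ∃ a : V → Bool, ∀ v, N ≤ r v + j →
      2 * (univ.filter (fun u => r v < r u ∧ R v u ∧ a u = a v)).card ≤
        (univ.filter (fun u => r v < r u ∧ R v u)).card := by
    intro j
    induction j with
    | zero =>
        exact ⟨fun _ => true, fun v hv => absurd hv (by have := hub v; omega)⟩
    | succ j ih =>
        obtain ⟨a, ha⟩ := ih
        set a' : V → Bool := fun v => if N ≤ r v + j then a v else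
          decide (2 * (univ.filter (fun u => r v < r u ∧ R v u ∧ a u = true)).card ≤
            (univ.filter (fun u => r v < r u ∧ R v u)).card) with ha'
        have hagree : ∀ u, N ≤ r u + j → a' u = a u := by
          intro u h; simp only [ha']; rw [if_pos h]
        have hfilter : ∀ v (c : Bool), N ≤ r v + j + 1 →
            univ.filter (fun u => r v < r u ∧ R v u ∧ a' u = c) =
              univ.filter (fun u => r v < r u ∧ R v u ∧ a u = c) := by
          intro v c hv
          apply filter_congr
          intro u _
          constructor
          · rintro ⟨h1, h2, h3⟩
            exact ⟨h1, h2, by rw [← hagree u (by omega)]; exact h3⟩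
          · rintro ⟨h1, h2, h3⟩
            exact ⟨h1, h2, by rw [hagree u (by omega)]; exact h3⟩
        refine ⟨a', ?_⟩
        intro v hv
        by_cases hold : N ≤ r v + j
        · have hv' : a' v = a v := hagree v hold
          rw [hv', hfilter v (a v) hv]
          exact ha v hold
        · -- new vertex
          set T := univ.filter (fun u => r v < r u ∧ R v u) with hT
          have hTT : (univ.filter (fun u => r v < r u ∧ R v u ∧ a u = true))
              = T.filter (fun u => a u = true) := by
            rw [hT, filter_filter]
            apply filter_congr; intro u _; tauto
          have hTF : (univ.filter (fun u => r v < r u ∧ R v u ∧ a u = false))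
              = T.filter (fun u => a u = false) := by
            rw [hT, filter_filter]
            apply filter_congr; intro u _; tauto
          have hsum : (T.filter (fun u => a u = true)).card
              + (T.filter (fun u => a u = false)).card = T.card := by
            have := Finset.card_filter_add_card_filter_not
              (s := T) (p := fun u => a u = true)
            simpa [Bool.not_eq_true] using this
          have hdef : a' v = decide (2 * (T.filter (fun u => a u = true)).card ≤ T.card) := by
            simp only [ha']; rw [if_neg hold, hTT]
          rw [hfilter v (a' v) hv]
          by_cases hch : 2 * (T.filter (fun u => a u = true)).card ≤ T.card
          · have : a' v = true := by rw [hdef]; simp [hch]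
            rw [this, hTT]
            exact hch
          · have : a' v = false := by rw [hdef]; simp [hch]
            rw [this, hTF]
            omega
  obtain ⟨a, ha⟩ := key N
  exact ⟨a, fun v => ha v (by omega)⟩

/-- Every digraph is 1/2-majority 4-colourable. -/
theorem majority_four_colouring
    {V : Type*} [Fintype V] [DecidableEq V]
    (D : V → V → Prop) [DecidableRel D] (hirr : ∀ v, ¬ D v v) :
    ∃ c : V → Fin 4, ∀ v : V,
      2 * (Finset.univ.filter (fun u => D v u ∧ c u = c v)).card ≤
        (Finset.univ.filter (fun u => D v u)).card := by
  classical
  set r : V → ℕ := fun v => (Fintype.equivFin V v : ℕ) with hr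
  have hrlt : ∀ v, r v < Fintype.card V := fun v => (Fintype.equivFin V v).2
  have hrinj : ∀ u v : V, r u = r v → u = v := fun u v h =>
    (Fintype.equivFin V).injective (Fin.ext h)
  obtain ⟨a, ha⟩ := greedy_half D r
  obtain ⟨b, hb0⟩ := greedy_half D (fun v => Fintype.card V - r v)
  have hb : ∀ v, 2 * (univ.filter (fun u => r u < r v ∧ D v u ∧ b u = b v)).card ≤
      (univ.filter (fun u => r u < r v ∧ D v u)).card := by
    intro v
    have h1 : univ.filter (fun u => Fintype.card V - r v < Fintype.card V - r u ∧ D v u ∧ b u = b v)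
        = univ.filter (fun u => r u < r v ∧ D v u ∧ b u = b v) := by
      apply filter_congr; intro u _
      have := hrlt u; have := hrlt v
      constructor <;> rintro ⟨h1, h2⟩ <;> exact ⟨by omega, h2⟩
    have h2 : univ.filter (fun u => Fintype.card V - r v < Fintype.card V - r u ∧ D v u)
        = univ.filter (fun u => r u < r v ∧ D v u) := by
      apply filter_congr; intro u _
      have := hrlt u; have := hrlt v
      constructor <;> rintro ⟨h1, h2⟩ <;> exact ⟨by omega, h2⟩
    have := hb0 v
    rwa [h1, h2] at this
  set c : V → Fin 4 := fun v =>
    if a v then (if b v then 0 else 1) else (if b v then 2 else 3) with hc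
  have hcab : ∀ u v, c u = c v → a u = a v ∧ b u = b v := by
    intro u v h
    simp only [hc] at h
    cases hau : a u <;> cases hbu : b u <;> cases hav : a v <;> cases hbv : b v <;>
      simp [hau, hbu, hav, hbv] at h ⊢
  refine ⟨c, fun v => ?_⟩
  have hsub : univ.filter (fun u => D v u ∧ c u = c v) ⊆
      (univ.filter (fun u => r v < r u ∧ D v u ∧ a u = a v)) ∪
      (univ.filter (fun u => r u < r v ∧ D v u ∧ b u = b v)) := by
    intro u hu
    simp only [mem_filter, mem_union, mem_univ, true_and] at hu ⊢
    obtain ⟨h1, h2⟩ := hu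
    have hne : u ≠ v := fun e => hirr v (e ▸ h1)
    have hrne : r u ≠ r v := fun e => hne (hrinj u v e)
    obtain ⟨hA, hB⟩ := hcab u v h2
    rcases lt_or_gt_of_ne hrne with h | h
    · exact Or.inr ⟨h, h1, hB⟩
    · exact Or.inl ⟨h, h1, hA⟩
  have hM : (univ.filter (fun u => D v u ∧ c u = c v)).card ≤
      (univ.filter (fun u => r v < r u ∧ D v u ∧ a u = a v)).card +
      (univ.filter (fun u => r u < r v ∧ D v u ∧ b u = b v)).card :=
    le_trans (card_le_card hsub) (card_union_le _ _)
  have hsplit : (univ.filter (fun u => r v < r u ∧ D v u)).card +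
      (univ.filter (fun u => r u < r v ∧ D v u)).card =
      (univ.filter (fun u => D v u)).card := by
    have hdisj : Disjoint (univ.filter (fun u => r v < r u ∧ D v u))
        (univ.filter (fun u => r u < r v ∧ D v u)) := by
      rw [Finset.disjoint_left]
      intro u h1 h2
      simp only [mem_filter] at h1 h2
      omega
    rw [← card_union_of_disjoint hdisj]
    congr 1
    ext u
    simp only [mem_union, mem_filter, mem_univ, true_and]
    constructor
    · rintro (⟨_, h⟩ | ⟨_, h⟩) <;> exact h
    · intro h
      have hne : u ≠ v := fun e => hirr v (e ▸ h)
      have hrne : r u ≠ r v := fun e => hne (hrinj u v e)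
      rcases lt_or_gt_of_ne hrne with h' | h'
      · exact Or.inr ⟨h', h⟩
      · exact Or.inl ⟨h', h⟩
  have hA := ha v
  have hB := hb v
  omega
end

section
/- Let b_{ij} (1 <= i, j <= n) be nonnegative reals with b_{ii} = 0, and suppose for each i the row sum and column sum of b at index i are both equal to u_i > 0. Let L_1, ..., L_n be finite sets each of size m, and let f with f(i) in L_i minimize the quantity sum over colours r of sum over pairs i,j with f(i) = f(j) = r of b_{ij}. Then for every i, writing r = f(i), the sum over j in f^{-1}(r) of b_{ij} is at most 2 u_i / m. -/
/-- The local exchange step: if f minimizes the total monochromatic weight over all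
choices from the lists, then every i sees monochromatic weight at most 2 u_i / m. -/
theorem local_exchange_bound (n m : ℕ) (b : Fin n → Fin n → ℝ) (u : Fin n → ℝ)
    (hnn : ∀ i j, 0 ≤ b i j) (hdiag : ∀ i, b i i = 0) (hu : ∀ i, 0 < u i)
    (hrow : ∀ i, ∑ j, b i j = u i) (hcol : ∀ i, ∑ j, b j i = u i)
    (L : Fin n → Finset ℕ) (hL : ∀ i, (L i).card = m)
    (f : Fin n → ℕ) (hf : ∀ i, f i ∈ L i)
    (hmin : ∀ g : Fin n → ℕ, (∀ i, g i ∈ L i) →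
      ∑ i, ∑ j ∈ Finset.univ.filter (fun j => f j = f i), b i j ≤
        ∑ i, ∑ j ∈ Finset.univ.filter (fun j => g j = g i), b i j) :
    ∀ i, ∑ j ∈ Finset.univ.filter (fun j => f j = f i), b i j ≤ 2 * u i / m := by
  intro i
  have hm : 0 < m := by
    rw [← hL i]; exact Finset.card_pos.mpr ⟨f i, hf i⟩
  set r := f i with hr
  have key : ∀ l ∈ L i,
      (∑ j, (if f j = r then b i j + b j i else 0)) ≤
      (∑ j, (if f j = l then b i j + b j i else 0)) := by
    intro l hl
    set g : Fin n → ℕ := Function.update f i l with hg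
    have hg' : ∀ k, g k ∈ L k := by
      intro k
      by_cases hk : k = i
      · subst hk; simpa [hg] using hl
      · simpa [hg, Function.update_of_ne hk] using hf k
    have hSS := hmin g hg'
    have hkey : ∀ k j : Fin n,
        (if g j = g k then b k j else 0)
          + (if j = i then (if f k = r then b k i else 0) else 0)
          + (if k = i then (if f j = r then b i j else 0) else 0)
        = (if f j = f k then b k j else 0)
          + (if j = i then (if f k = l then b k i else 0) else 0)
          + (if k = i then (if f j = l then b i j else 0) else 0) := by
      intro k j
      by_cases hk : k = i <;> by_cases hj : j = i
      · rw [hk, hj]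
        simp only [hg, Function.update_self, if_pos rfl, hdiag i]
        split_ifs <;> ring
      · rw [hk]
        simp only [hg, Function.update_self, Function.update_of_ne hj, if_neg hj,
          if_pos rfl, if_true, add_zero, ← hr]
        ring
      · rw [hj]
        simp only [hg, Function.update_self, Function.update_of_ne hk, if_neg hk,
          if_pos rfl, if_true, add_zero, ← hr]
        have e1 : (if l = f k then b k i else 0) = (if f k = l then b k i else 0) :=
          if_congr eq_comm rfl rfl
        have e2 : (if r = f k then b k i else 0) = (if f k = r then b k i else 0) :=
          if_congr eq_comm rfl rfl
        rw [e1, e2]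
        ring
      · simp [hg, Function.update_of_ne hk, Function.update_of_ne hj, hk, hj]
    have E : (∑ k, ∑ j, (if g j = g k then b k j else 0))
          + ((∑ k, if f k = r then b k i else 0) + (∑ j, if f j = r then b i j else 0))
        = (∑ k, ∑ j, (if f j = f k then b k j else 0))
          + ((∑ k, if f k = l then b k i else 0) + (∑ j, if f j = l then b i j else 0)) := by
      have h1 : ∀ (h : Fin n → ℕ) (c : ℕ),
          ∑ k : Fin n, ∑ j : Fin n,
            ((if h j = h k then b k j else 0)
              + (if j = i then (if f k = c then b k i else 0) else 0)
              + (if k = i then (if f j = c then b i j else 0) else 0))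
          = (∑ k : Fin n, ∑ j : Fin n, (if h j = h k then b k j else 0))
            + ((∑ k, if f k = c then b k i else 0) + (∑ j, if f j = c then b i j else 0)) := by
        intro h c
        have hB : (∑ k : Fin n, ∑ j : Fin n, if j = i then (if f k = c then b k i else 0) else 0)
            = ∑ k, if f k = c then b k i else 0 := by
          apply Finset.sum_congr rfl; intro k _; simp
        have hC : (∑ k : Fin n, ∑ j : Fin n, if k = i then (if f j = c then b i j else 0) else 0)
            = ∑ j, if f j = c then b i j else 0 := by
          rw [Finset.sum_comm]
          apply Finset.sum_congr rfl; intro j _; simp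
        simp only [Finset.sum_add_distrib, hB, hC]
        ring
      calc (∑ k, ∑ j, (if g j = g k then b k j else 0))
          + ((∑ k, if f k = r then b k i else 0) + (∑ j, if f j = r then b i j else 0))
          = ∑ k : Fin n, ∑ j : Fin n,
            ((if g j = g k then b k j else 0)
              + (if j = i then (if f k = r then b k i else 0) else 0)
              + (if k = i then (if f j = r then b i j else 0) else 0)) := (h1 g r).symm
        _ = ∑ k : Fin n, ∑ j : Fin n,
            ((if f j = f k then b k j else 0)
              + (if j = i then (if f k = l then b k i else 0) else 0)
              + (if k = i then (if f j = l then b i j else 0) else 0)) := by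
              apply Finset.sum_congr rfl; intro k _
              apply Finset.sum_congr rfl; intro j _
              exact hkey k j
        _ = _ := h1 f l
    have hSf : (∑ k : Fin n, ∑ j ∈ Finset.univ.filter (fun j => f j = f k), b k j)
        = ∑ k : Fin n, ∑ j : Fin n, (if f j = f k then b k j else 0) := by
      apply Finset.sum_congr rfl; intro k _; rw [Finset.sum_filter]
    have hSg : (∑ k : Fin n, ∑ j ∈ Finset.univ.filter (fun j => g j = g k), b k j)
        = ∑ k : Fin n, ∑ j : Fin n, (if g j = g k then b k j else 0) := by
      apply Finset.sum_congr rfl; intro k _; rw [Finset.sum_filter]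
    rw [hSf, hSg] at hSS
    have split : ∀ c : ℕ, (∑ j : Fin n, (if f j = c then b i j + b j i else 0))
        = (∑ j : Fin n, if f j = c then b j i else 0) + (∑ j : Fin n, if f j = c then b i j else 0) := by
      intro c
      rw [← Finset.sum_add_distrib]
      apply Finset.sum_congr rfl; intro j _
      split_ifs <;> ring
    rw [split r, split l]
    linarith
  -- summing over l in L i
  have Akey : (m : ℝ) * (∑ j, (if f j = r then b i j + b j i else 0)) ≤ 2 * u i := by
    have h1 : (m : ℝ) * (∑ j, (if f j = r then b i j + b j i else 0))
        = ∑ l ∈ L i, (∑ j, (if f j = r then b i j + b j i else 0)) := by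
      rw [Finset.sum_const, hL i, nsmul_eq_mul]
    rw [h1]
    calc ∑ l ∈ L i, (∑ j, (if f j = r then b i j + b j i else 0))
        ≤ ∑ l ∈ L i, (∑ j, (if f j = l then b i j + b j i else 0)) :=
          Finset.sum_le_sum (fun l hl => key l hl)
      _ = ∑ j : Fin n, ∑ l ∈ L i, (if f j = l then b i j + b j i else 0) := Finset.sum_comm
      _ = ∑ j : Fin n, (if f j ∈ L i then b i j + b j i else 0) := by
          apply Finset.sum_congr rfl; intro j _
          rw [Finset.sum_ite_eq (L i) (f j) (fun _ => b i j + b j i)]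
      _ ≤ ∑ j : Fin n, (b i j + b j i) := by
          apply Finset.sum_le_sum; intro j _
          split_ifs
          · exact le_refl _
          · have := hnn i j; have := hnn j i; linarith
      _ = 2 * u i := by
          rw [Finset.sum_add_distrib, hrow i, hcol i]; ring
  have htarget : (∑ j ∈ Finset.univ.filter (fun j => f j = r), b i j)
      ≤ ∑ j, (if f j = r then b i j + b j i else 0) := by
    rw [Finset.sum_filter]
    apply Finset.sum_le_sum; intro j _
    split_ifs
    · have := hnn j i; linarith
    · exact le_refl _
  have hm' : (0:ℝ) < (m:ℝ) := by exact_mod_cast hm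
  rw [le_div_iff₀ hm']
  nlinarith [Akey, htarget, hm']
end
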